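/- arXiv:2201.13385 — 6 statements merged into one kernel-verified Lean document; each statement's English description precedes it below -/
import Mathlib

section
/- Two vertices α, β of a simple undirected graph Γ lie in the same coherent component (α ∼ β) if and only if the transposition exchanging α and β (and fixing all other vertices) is an automorphism of Γ. -/
/-- `α ≺ β` : the open neighbourhood of `α` is contained in the closed neighbourhood of `β`. -/
def GraphPrec {S : Type} (G : SimpleGraph S) (a b : S) : Prop :=
  ∀ c, G.Adj a c → (G.Adj b c ∨ c = b)

/-- `α ∼ β` : `α ≺ β` and `β ≺ α`. -/
def GraphSim {S : Type} (G : SimpleGraph S) (a b : S) : Prop :=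
  GraphPrec G a b ∧ GraphPrec G b a

/-- Two vertices `α, β` of a simple graph satisfy `α ∼ β` if and only if the
transposition exchanging `α` and `β` (fixing all other vertices) is a graph automorphism. -/
theorem graphSim_iff_swap_is_automorphism (S : Type) [DecidableEq S] (G : SimpleGraph S)
    (α β : S) :
    GraphSim G α β ↔
      (∀ x y, G.Adj (Equiv.swap α β x) (Equiv.swap α β y) ↔ G.Adj x y) := by
  constructor
  · rintro ⟨hab, hba⟩
    have key : ∀ x y, G.Adj x y → G.Adj (Equiv.swap α β x) (Equiv.swap α β y) := by
      intro x y hxy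
      have step : ∀ z w, G.Adj z w → z ≠ α → z ≠ β →
          G.Adj z (Equiv.swap α β w) := by
        intro z w hzw hzα hzβ
        rcases eq_or_ne w α with rfl | hwα
        · rw [Equiv.swap_apply_left]
          rcases hab z hzw.symm with h | h
          · exact h.symm
          · exact absurd h hzβ
        rcases eq_or_ne w β with rfl | hwβ
        · rw [Equiv.swap_apply_right]
          rcases hba z hzw.symm with h | h
          · exact h.symm
          · exact absurd h hzα
        · rwa [Equiv.swap_apply_of_ne_of_ne hwα hwβ]
      rcases eq_or_ne x α with hx | hxα
      · rw [hx] at hxy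
        rw [hx, Equiv.swap_apply_left]
        rcases eq_or_ne y α with rfl | hyα
        · exact absurd rfl hxy.ne
        rcases eq_or_ne y β with rfl | hyβ
        · rw [Equiv.swap_apply_right]; exact hxy.symm
        · rw [Equiv.swap_apply_of_ne_of_ne hyα hyβ]
          rcases hab y hxy with h | h
          · exact h
          · exact absurd h hyβ
      rcases eq_or_ne x β with hx | hxβ
      · rw [hx] at hxy
        rw [hx, Equiv.swap_apply_right]
        rcases eq_or_ne y β with rfl | hyβ
        · exact absurd rfl hxy.ne
        rcases eq_or_ne y α with rfl | hyα
        · rw [Equiv.swap_apply_left]; exact hxy.symm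
        · rw [Equiv.swap_apply_of_ne_of_ne hyα hyβ]
          rcases hba y hxy with h | h
          · exact h
          · exact absurd h hyα
      · rw [Equiv.swap_apply_of_ne_of_ne hxα hxβ]
        exact step x y hxy hxα hxβ
    intro x y
    constructor
    · intro h
      have := key _ _ h
      simpa using this
    · exact key x y
  · intro h
    constructor
    · intro c hc
      rcases eq_or_ne c β with rfl | hcβ
      · exact Or.inr rfl
      left
      rcases eq_or_ne c α with rfl | hcα
      · exact absurd rfl hc.ne
      have := (h α c).mpr hc
      rwa [Equiv.swap_apply_left, Equiv.swap_apply_of_ne_of_ne hcα hcβ] at this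
    · intro c hc
      rcases eq_or_ne c α with rfl | hcα
      · exact Or.inr rfl
      left
      rcases eq_or_ne c β with rfl | hcβ
      · exact absurd rfl hc.ne
      have := (h β c).mpr hc
      rwa [Equiv.swap_apply_right, Equiv.swap_apply_of_ne_of_ne hcα hcβ] at this
end

section
/- For a simple undirected graph Γ with set of coherent components Λ, the sequence 1 → ∏_{λ∈Λ} Perm(λ) → Aut(Γ) → Aut(Γ̄) → 1 is exact, where the first map includes permutations of vertices within each coherent component and the second is θ ↦ θ̄, the induced map on coherent components. -/
/-- The set `Λ` of coherent components of the graph. -/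
def CoherentComponents {S : Type} (G : SimpleGraph S) : Type := Quot (GraphSim G)

/-- The edge relation of the quotient graph `Γ̄` (which may have loops). -/
def QuotAdj {S : Type} (G : SimpleGraph S) (x y : CoherentComponents G) : Prop :=
  ∃ a b : S, Quot.mk (GraphSim G) a = x ∧ Quot.mk (GraphSim G) b = y ∧ G.Adj a b

/-- The weight `Φ(λ) = |λ|` of a coherent component. -/
noncomputable def QuotWeight {S : Type} (G : SimpleGraph S) (x : CoherentComponents G) : ℕ :=
  Nat.card {a : S // Quot.mk (GraphSim G) a = x}

/-- The automorphism group of `Γ`, as a subgroup of `Perm S`. -/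
def GraphAut {S : Type} (G : SimpleGraph S) : Subgroup (Equiv.Perm S) where
  carrier := {θ | ∀ a b, G.Adj (θ a) (θ b) ↔ G.Adj a b}
  one_mem' := by intro a b; rfl
  mul_mem' := by
    intro θ η hθ hη a b
    simpa [Equiv.Perm.mul_apply] using (hθ (η a) (η b)).trans (hη a b)
  inv_mem' := by
    intro θ hθ a b
    simpa using (hθ (θ⁻¹ a) (θ⁻¹ b)).symm

/-- The automorphism group of the weighted quotient graph `Γ̄`, as a subgroup of `Perm Λ`:
permutations preserving the induced edges (including loops) and the weights. -/
def QuotGraphAut {S : Type} (G : SimpleGraph S) : Subgroup (Equiv.Perm (CoherentComponents G)) where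
  carrier := {φ | (∀ x y, QuotAdj G (φ x) (φ y) ↔ QuotAdj G x y) ∧
    ∀ x, QuotWeight G (φ x) = QuotWeight G x}
  one_mem' := by exact ⟨fun x y => Iff.rfl, fun x => rfl⟩
  mul_mem' := by
    intro φ ψ hφ hψ
    refine ⟨fun x y => ?_, fun x => ?_⟩
    · simpa [Equiv.Perm.mul_apply] using ((hφ.1 (ψ x) (ψ y)).trans (hψ.1 x y))
    · simpa [Equiv.Perm.mul_apply] using (hφ.2 (ψ x)).trans (hψ.2 x)
  inv_mem' := by
    intro φ hφ
    refine ⟨fun x y => ?_, fun x => ?_⟩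
    · simpa using (hφ.1 (φ⁻¹ x) (φ⁻¹ y)).symm
    · simpa using (hφ.2 (φ⁻¹ x)).symm

/-- `θ` induces `φ` on the set of coherent components. -/
def Induces {S : Type} (G : SimpleGraph S) (θ : Equiv.Perm S)
    (φ : Equiv.Perm (CoherentComponents G)) : Prop :=
  ∀ a : S, φ (Quot.mk (GraphSim G) a) = Quot.mk (GraphSim G) (θ a)

section AuxLemmas

variable {S : Type} {G : SimpleGraph S}

theorem graphPrec_trans' {a b c : S} (hab : GraphPrec G a b)
    (hbc : GraphPrec G b c) : GraphPrec G a c := by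
  intro d had
  rcases hab d had with h | rfl
  · exact hbc d h
  · rcases hbc a had.symm with h | rfl
    · rcases hab c h.symm with h2 | h2
      · exact Or.inl h2.symm
      · exact Or.inr h2.symm
    · exact Or.inl had

theorem graphSim_equivalence : Equivalence (GraphSim G) where
  refl a := ⟨fun c h => Or.inl h, fun c h => Or.inl h⟩
  symm h := ⟨h.2, h.1⟩
  trans := by
    rintro a b c ⟨hab, hba⟩ ⟨hbc, hcb⟩
    exact ⟨graphPrec_trans' hab hbc, graphPrec_trans' hcb hba⟩

theorem mk_eq_mk {a b : S} :
    Quot.mk (GraphSim G) a = Quot.mk (GraphSim G) b ↔ GraphSim G a b := by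
  rw [Quot.eq]
  exact graphSim_equivalence.eqvGen_iff

theorem aut_prec {θ : Equiv.Perm S} (hθ : θ ∈ GraphAut G) {a b : S}
    (h : GraphPrec G a b) : GraphPrec G (θ a) (θ b) := by
  intro c hc
  have h1 : G.Adj a (θ⁻¹ c) := (hθ a (θ⁻¹ c)).mp (by simpa using hc)
  rcases h _ h1 with h2 | h2
  · exact Or.inl (by simpa using (hθ b (θ⁻¹ c)).mpr h2)
  · right
    have := congrArg θ h2
    simpa using this

theorem aut_sim {θ : Equiv.Perm S} (hθ : θ ∈ GraphAut G) {a b : S}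
    (h : GraphSim G a b) : GraphSim G (θ a) (θ b) :=
  ⟨aut_prec hθ h.1, aut_prec hθ h.2⟩

theorem aut_sim_iff {θ : Equiv.Perm S} (hθ : θ ∈ GraphAut G) (a b : S) :
    GraphSim G (θ a) (θ b) ↔ GraphSim G a b := by
  constructor
  · intro h
    have := aut_sim ((GraphAut G).inv_mem hθ) h
    simpa using this
  · exact aut_sim hθ

theorem adj_iff_quotAdj {a b : S} :
    G.Adj a b ↔ QuotAdj G (Quot.mk (GraphSim G) a) (Quot.mk (GraphSim G) b) ∧ a ≠ b := by
  constructor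
  · intro h
    exact ⟨⟨a, b, rfl, rfl, h⟩, h.ne⟩
  · rintro ⟨⟨a', b', ha, hb, hab⟩, hne⟩
    replace ha : GraphSim G a' a := mk_eq_mk.mp ha
    replace hb : GraphSim G b' b := mk_eq_mk.mp hb
    rcases ha.1 b' hab with h1 | rfl
    · rcases hb.1 a h1.symm with h2 | h2
      · exact h2.symm
      · exact absurd h2 hne
    · -- b' = a : we have `hab : G.Adj a' a` and `hb : GraphSim G a b`
      rcases hb.1 a' hab.symm with h2 | rfl
      · rcases ha.1 b h2.symm with h3 | h3
        · exact h3
        · exact absurd h3.symm hne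
      · exact hab.symm

theorem quotAdj_map {θ : Equiv.Perm S} (hθ : θ ∈ GraphAut G) (a b : S) :
    QuotAdj G (Quot.mk (GraphSim G) (θ a)) (Quot.mk (GraphSim G) (θ b)) ↔
      QuotAdj G (Quot.mk (GraphSim G) a) (Quot.mk (GraphSim G) b) := by
  constructor
  · rintro ⟨a', b', ha, hb, hab⟩
    refine ⟨θ⁻¹ a', θ⁻¹ b', ?_, ?_, ((GraphAut G).inv_mem hθ a' b').mpr hab⟩
    · rw [mk_eq_mk] at ha ⊢
      simpa using aut_sim ((GraphAut G).inv_mem hθ) ha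
    · rw [mk_eq_mk] at hb ⊢
      simpa using aut_sim ((GraphAut G).inv_mem hθ) hb
  · rintro ⟨a', b', ha, hb, hab⟩
    refine ⟨θ a', θ b', ?_, ?_, (hθ a' b').mpr hab⟩
    · rw [mk_eq_mk] at ha ⊢
      exact aut_sim hθ ha
    · rw [mk_eq_mk] at hb ⊢
      exact aut_sim hθ hb

theorem quotWeight_map {θ : Equiv.Perm S} (hθ : θ ∈ GraphAut G) (b : S) :
    QuotWeight G (Quot.mk (GraphSim G) (θ b)) = QuotWeight G (Quot.mk (GraphSim G) b) := by
  unfold QuotWeight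
  exact (Nat.card_congr (Equiv.subtypeEquiv θ (fun a => by
    rw [mk_eq_mk, mk_eq_mk]
    exact (aut_sim_iff hθ a b).symm))).symm

/-- The permutation of components induced by a graph automorphism. -/
def inducedPerm {G : SimpleGraph S} (θ : Equiv.Perm S) (hθ : θ ∈ GraphAut G) :
    Equiv.Perm (CoherentComponents G) where
  toFun := Quot.map (⇑θ) (fun _ _ h => aut_sim hθ h)
  invFun := Quot.map (⇑θ⁻¹) (fun _ _ h => aut_sim ((GraphAut G).inv_mem hθ) h)
  left_inv := by
    rintro ⟨a⟩
    show Quot.mk (GraphSim G) (θ⁻¹ (θ a)) = Quot.mk (GraphSim G) a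
    simp
  right_inv := by
    rintro ⟨a⟩
    show Quot.mk (GraphSim G) (θ (θ⁻¹ a)) = Quot.mk (GraphSim G) a
    simp

end AuxLemmas

/-- the sequence `1 → ∏_{λ∈Λ} Perm(λ) → Aut(Γ) → Aut(Γ̄) → 1` is exact:
every `θ ∈ Aut(Γ)` induces a unique permutation `θ̄` of `Λ`, the assignment is
multiplicative, its image lies in (and fills up) `Aut(Γ̄)`, and its kernel consists exactly
of the automorphisms preserving each coherent component, i.e. `∏_{λ∈Λ} Perm(λ)`. -/
theorem quotient_graph_exact_sequence (S : Type) [Fintype S] (G : SimpleGraph S) :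
    (∀ θ ∈ GraphAut G, ∃! φ : Equiv.Perm (CoherentComponents G), Induces G θ φ) ∧
    (∀ θ θ' φ φ', Induces G θ φ → Induces G θ' φ' → Induces G (θ * θ') (φ * φ')) ∧
    (∀ θ ∈ GraphAut G, ∀ φ, Induces G θ φ → φ ∈ QuotGraphAut G) ∧
    (∀ θ ∈ GraphAut G, (Induces G θ 1 ↔ ∀ a : S, GraphSim G (θ a) a)) ∧
    (∀ φ ∈ QuotGraphAut G, ∃ θ ∈ GraphAut G, Induces G θ φ) := by
  classical
  refine ⟨?_, ?_, ?_, ?_, ?_⟩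
  · -- existence and uniqueness of the induced permutation
    intro θ hθ
    refine ⟨inducedPerm θ hθ, fun a => rfl, ?_⟩
    intro φ' h
    refine Equiv.ext ?_
    rintro ⟨a⟩
    exact h a
  · -- multiplicativity
    intro θ θ' φ φ' h h' a
    exact (congrArg φ (h' a)).trans (h (θ' a))
  · -- image lies in Aut(Γ̄)
    intro θ hθ φ hInd
    refine ⟨?_, ?_⟩
    · rintro ⟨a⟩ ⟨b⟩
      show QuotAdj G (φ (Quot.mk (GraphSim G) a)) (φ (Quot.mk (GraphSim G) b)) ↔ _
      rw [hInd a, hInd b]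
      exact quotAdj_map hθ a b
    · rintro ⟨a⟩
      show QuotWeight G (φ (Quot.mk (GraphSim G) a)) = _
      rw [hInd a]
      exact quotWeight_map hθ a
  · -- kernel characterisation
    intro θ _
    constructor
    · intro h a
      exact graphSim_equivalence.symm (mk_eq_mk.mp (h a))
    · intro h a
      exact mk_eq_mk.mpr (graphSim_equivalence.symm (h a))
  · -- surjectivity onto Aut(Γ̄)
    rintro φ ⟨hA, hW⟩
    have hNE : ∀ x : CoherentComponents G,
        Nonempty ({a : S // Quot.mk (GraphSim G) a = x} ≃
          {a : S // Quot.mk (GraphSim G) a = φ x}) := fun x =>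
      Finite.card_eq.mp (hW x).symm
    set e := fun x => (hNE x).some with he
    have e_val_congr : ∀ {x y : CoherentComponents G} (h : x = y) (a : S)
        (hx : Quot.mk (GraphSim G) a = x) (hy : Quot.mk (GraphSim G) a = y),
        ((e x) ⟨a, hx⟩).val = ((e y) ⟨a, hy⟩).val := by
      intro x y h a hx hy
      subst h
      rfl
    set F : S → S := fun a => ((e (Quot.mk (GraphSim G) a)) ⟨a, rfl⟩).val with hF
    have hmkF : ∀ a : S, Quot.mk (GraphSim G) (F a) = φ (Quot.mk (GraphSim G) a) :=
      fun a => ((e (Quot.mk (GraphSim G) a)) ⟨a, rfl⟩).prop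
    have hFinj : Function.Injective F := by
      intro a b hab
      have hx : Quot.mk (GraphSim G) a = Quot.mk (GraphSim G) b := by
        have := (hmkF a).symm.trans (hab ▸ hmkF b)
        exact φ.injective this
      have h1 : ((e (Quot.mk (GraphSim G) b)) ⟨b, rfl⟩).val
          = ((e (Quot.mk (GraphSim G) a)) ⟨b, hx.symm⟩).val :=
        e_val_congr hx.symm b rfl hx.symm
      have h2 : ((e (Quot.mk (GraphSim G) a)) ⟨a, rfl⟩)
          = ((e (Quot.mk (GraphSim G) a)) ⟨b, hx.symm⟩) :=
        Subtype.ext (by rw [← h1]; exact hab)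
      have := (e (Quot.mk (GraphSim G) a)).injective h2
      exact congrArg Subtype.val this
    have hFsurj : Function.Surjective F := by
      intro b
      have hb : Quot.mk (GraphSim G) b = φ (φ⁻¹ (Quot.mk (GraphSim G) b)) := by exact (Equiv.apply_symm_apply φ _).symm
      set u := (e (φ⁻¹ (Quot.mk (GraphSim G) b))).symm ⟨b, hb⟩ with hu
      refine ⟨u.val, ?_⟩
      have h1 : F u.val = ((e (φ⁻¹ (Quot.mk (GraphSim G) b))) ⟨u.val, u.prop⟩).val :=
        e_val_congr u.prop u.val rfl u.prop
      have h2 : (⟨u.val, u.prop⟩ : {a : S // Quot.mk (GraphSim G) a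
          = φ⁻¹ (Quot.mk (GraphSim G) b)}) = u := Subtype.ext rfl
      rw [h1, h2, hu, Equiv.apply_symm_apply]
    set θ : Equiv.Perm S := Equiv.ofBijective F ⟨hFinj, hFsurj⟩ with hθdef
    have hθap : ∀ a, θ a = F a := fun a => rfl
    have hmk : ∀ a : S, Quot.mk (GraphSim G) (θ a) = φ (Quot.mk (GraphSim G) a) :=
      fun a => hmkF a
    have hθaut : θ ∈ GraphAut G := by
      intro a b
      rw [adj_iff_quotAdj, adj_iff_quotAdj (a := a) (b := b), hmk a, hmk b, show QuotAdj G (φ (Quot.mk (GraphSim G) a)) (φ (Quot.mk (GraphSim G) b)) ↔ QuotAdj G (Quot.mk (GraphSim G) a) (Quot.mk (GraphSim G) b) from hA _ _]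
      constructor
      · rintro ⟨h1, h2⟩
        exact ⟨h1, fun h => h2 (by rw [h])⟩
      · rintro ⟨h1, h2⟩
        exact ⟨h1, fun h => h2 (θ.injective h)⟩
    exact ⟨θ, hθaut, fun a => (hmk a).symm⟩
end

section
/- The short exact sequence 1 → ∏_{λ∈Λ} Perm(λ) → Aut(Γ) → Aut(Γ̄) → 1 is right-split: there exists a group homomorphism r : Aut(Γ̄) → Aut(Γ) with θ̄∘r = id; consequently Aut(Γ) ≅ (∏_{λ∈Λ} Perm(λ)) ⋊ Aut(Γ̄). Moreover r can be chosen so that whenever φ ∈ Aut(Γ̄) fixes a coherent component λ, r(φ) restricts to the identity on λ. -/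
namespace QGS

variable {S : Type} (G : SimpleGraph S)

theorem prec_refl (a : S) : GraphPrec G a a := fun _ h => Or.inl h

theorem sim_refl (a : S) : GraphSim G a a := ⟨prec_refl G a, prec_refl G a⟩

theorem sim_symm {a b : S} (h : GraphSim G a b) : GraphSim G b a := ⟨h.2, h.1⟩

theorem prec_of_sim_sim {a b c : S} (hab : GraphSim G a b) (hbc : GraphSim G b c) :
    GraphPrec G a c := by
  intro d hd
  rcases hab.1 d hd with h | h
  · rcases hbc.1 d h with h' | h'
    · exact Or.inl h'
    · exact Or.inr h'
  · subst h
    rcases hbc.1 a hd.symm with h' | h'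
    · rcases hab.1 c h'.symm with h'' | h''
      · exact Or.inl h''.symm
      · exact Or.inr h''.symm
    · exact Or.inl (h' ▸ hd)
  
theorem sim_trans {a b c : S} (hab : GraphSim G a b) (hbc : GraphSim G b c) :
    GraphSim G a c :=
  ⟨prec_of_sim_sim G hab hbc, prec_of_sim_sim G (sim_symm G hbc) (sim_symm G hab)⟩

theorem sim_equivalence : Equivalence (GraphSim G) :=
  ⟨sim_refl G, sim_symm G, sim_trans G⟩

theorem mk_eq_iff {a b : S} :
    Quot.mk (GraphSim G) a = Quot.mk (GraphSim G) b ↔ GraphSim G a b := by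
  rw [Quot.eq]; exact (sim_equivalence G).eqvGen_iff

/-- a coherent component containing an edge is a clique -/
theorem clique {a b x y : S} (hab : GraphSim G a b) (hadj : G.Adj a b)
    (hax : GraphSim G a x) (hay : GraphSim G a y) (hxy : x ≠ y) : G.Adj x y := by
  by_cases hxa : x = a
  · subst hxa
    have hby : GraphSim G b y := sim_trans G (sim_symm G hab) hay
    rcases hby.1 x hadj.symm with h | h
    · exact h.symm
    · exact absurd h hxy
  · have hbx : GraphSim G b x := sim_trans G (sim_symm G hab) hax
    rcases hbx.1 a hadj.symm with h | h
    · rcases hay.1 x h.symm with h' | h'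
      · exact h'.symm
      · exact absurd h' hxy
    · exact absurd h.symm hxa

theorem adj_of_adj_of_sim {a b a' b' : S} (ha : GraphSim G a a') (hb : GraphSim G b b')
    (hne : ¬ GraphSim G a b) (hadj : G.Adj a b) : G.Adj a' b' := by
  rcases ha.1 b hadj with h | h
  · rcases hb.1 a' h.symm with h' | h'
    · exact h'.symm
    · exact absurd (sim_trans G ha (h' ▸ sim_symm G hb)) hne
  · subst h
    exact absurd ha hne

/-- adjacency is determined by the coherent components (for distinct vertices) -/
theorem adj_iff_quotAdj {a b : S} (hne : a ≠ b) :
    G.Adj a b ↔ QuotAdj G (Quot.mk (GraphSim G) a) (Quot.mk (GraphSim G) b) := by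
  constructor
  · intro h; exact ⟨a, b, rfl, rfl, h⟩
  · rintro ⟨a', b', ha', hb', hadj⟩
    have ha : GraphSim G a' a := (mk_eq_iff G).1 ha'
    have hb : GraphSim G b' b := (mk_eq_iff G).1 hb'
    by_cases hs : GraphSim G a b
    · exact clique G (sim_trans G (sim_trans G ha hs) (sim_symm G hb)) hadj ha
        (sim_trans G ha hs) hne
    · exact adj_of_adj_of_sim G ha hb
        (fun h => hs (sim_trans G (sim_trans G (sim_symm G ha) h) hb)) hadj

section Aut

variable [Fintype S]

noncomputable def fibEquiv (x : CoherentComponents G) :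
    {a : S // Quot.mk (GraphSim G) a = x} ≃ Fin (QuotWeight G x) :=
  Finite.equivFinOfCardEq rfl

noncomputable def idx (a : S) : ℕ := (fibEquiv G (Quot.mk (GraphSim G) a) ⟨a, rfl⟩).val

theorem fib_val_eq {x y : CoherentComponents G} (h : x = y) (a : S)
    (h1 : Quot.mk (GraphSim G) a = x) (h2 : Quot.mk (GraphSim G) a = y) :
    (fibEquiv G x ⟨a, h1⟩).val = (fibEquiv G y ⟨a, h2⟩).val := by subst h; rfl

theorem fib_symm_val_eq {x y : CoherentComponents G} (h : x = y) {v w : ℕ} (hv : v = w)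
    (h1 : v < QuotWeight G x) (h2 : w < QuotWeight G y) :
    ((fibEquiv G x).symm ⟨v, h1⟩).val = ((fibEquiv G y).symm ⟨w, h2⟩).val := by
  subst h; subst hv; rfl

theorem idx_lt (φ : QuotGraphAut G) (a : S) :
    idx G a < QuotWeight G ((φ : Equiv.Perm (CoherentComponents G)) (Quot.mk (GraphSim G) a)) := by
  exact lt_of_lt_of_eq (fibEquiv G (Quot.mk (GraphSim G) a) ⟨a, rfl⟩).isLt (φ.prop.2 _).symm

noncomputable def fφ (φ : QuotGraphAut G) (a : S) : S :=
  ((fibEquiv G ((φ : Equiv.Perm (CoherentComponents G)) (Quot.mk (GraphSim G) a))).symm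
    ⟨idx G a, idx_lt G φ a⟩).val

theorem mk_fφ (φ : QuotGraphAut G) (a : S) :
    Quot.mk (GraphSim G) (fφ G φ a) = (φ : Equiv.Perm (CoherentComponents G)) (Quot.mk (GraphSim G) a) :=
  ((fibEquiv G _).symm _).prop

theorem idx_fφ (φ : QuotGraphAut G) (a : S) : idx G (fφ G φ a) = idx G a := by
  unfold idx
  rw [fib_val_eq G (mk_fφ G φ a) _ rfl (mk_fφ G φ a)]
  have h : (⟨fφ G φ a, mk_fφ G φ a⟩ :
      {s : S // Quot.mk (GraphSim G) s = (φ : Equiv.Perm (CoherentComponents G)) (Quot.mk (GraphSim G) a)}) =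
      (fibEquiv G _).symm ⟨idx G a, idx_lt G φ a⟩ := Subtype.ext rfl
  rw [h, Equiv.apply_symm_apply]
  rfl

theorem fφ_mul (φ ψ : QuotGraphAut G) (a : S) : fφ G φ (fφ G ψ a) = fφ G (φ * ψ) a :=
  fib_symm_val_eq G (by rw [mk_fφ]; rfl) (idx_fφ G ψ a) _ _

theorem fφ_fixed (φ : QuotGraphAut G) (a : S)
    (h : (φ : Equiv.Perm (CoherentComponents G)) (Quot.mk (GraphSim G) a) = Quot.mk (GraphSim G) a) :
    fφ G φ a = a := by
  have h1 := fib_symm_val_eq G h (rfl : idx G a = idx G a) (idx_lt G φ a)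
    (h ▸ idx_lt G φ a)
  refine (h1.trans ?_)
  show ((fibEquiv G (Quot.mk (GraphSim G) a)).symm
    (fibEquiv G (Quot.mk (GraphSim G) a) ⟨a, rfl⟩)).val = a
  rw [Equiv.symm_apply_apply]

theorem fφ_one (a : S) : fφ G 1 a = a := fφ_fixed G 1 a rfl

theorem fφ_inv_left (φ : QuotGraphAut G) (a : S) : fφ G φ⁻¹ (fφ G φ a) = a := by
  rw [fφ_mul, inv_mul_cancel, fφ_one]

theorem fφ_inv_right (φ : QuotGraphAut G) (a : S) : fφ G φ (fφ G φ⁻¹ a) = a := by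
  rw [fφ_mul, mul_inv_cancel, fφ_one]

noncomputable def Pφ (φ : QuotGraphAut G) : Equiv.Perm S :=
  ⟨fφ G φ, fφ G φ⁻¹, fφ_inv_left G φ, fφ_inv_right G φ⟩

theorem Pφ_mem (φ : QuotGraphAut G) : Pφ G φ ∈ GraphAut G := by
  intro a b
  by_cases hab : a = b
  · subst hab
    constructor <;> (intro h; exact absurd h (G.loopless.irrefl _))
  · have hne : fφ G φ a ≠ fφ G φ b := fun h => hab ((Pφ G φ).injective h)
    show G.Adj (fφ G φ a) (fφ G φ b) ↔ G.Adj a b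
    rw [adj_iff_quotAdj G hne, adj_iff_quotAdj G hab, mk_fφ, mk_fφ]
    exact φ.prop.1 _ _

noncomputable def r : QuotGraphAut G →* GraphAut G where
  toFun φ := ⟨Pφ G φ, Pφ_mem G φ⟩
  map_one' := Subtype.ext (Equiv.ext fun a => fφ_one G a)
  map_mul' φ ψ := Subtype.ext (Equiv.ext fun a => (fφ_mul G φ ψ a).symm)

theorem r_apply (φ : QuotGraphAut G) (a : S) :
    ((r G φ : GraphAut G) : Equiv.Perm S) a = fφ G φ a := rfl

end Aut

section Induced

theorem sim_map (θ : Equiv.Perm S) (hθ : θ ∈ GraphAut G) {a b : S} (h : GraphSim G a b) :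
    GraphSim G (θ a) (θ b) := by
  have key : ∀ x y : S, GraphPrec G x y → GraphPrec G (θ x) (θ y) := by
    intro x y hxy c hc
    have hc' : G.Adj x (θ⁻¹ c) := by
      have := (hθ x (θ⁻¹ c)).1
      simp only [show θ (θ⁻¹ c) = c from θ.apply_symm_apply c] at this
      exact this hc
    rcases hxy (θ⁻¹ c) hc' with h' | h'
    · left
      have := (hθ y (θ⁻¹ c)).2 h'
      simpa using this
    · right
      rw [← h']; simp
  exact ⟨key a b h.1, key b a h.2⟩

theorem mk_map_eq (θ : Equiv.Perm S) (hθ : θ ∈ GraphAut G) {a b : S}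
    (h : Quot.mk (GraphSim G) a = Quot.mk (GraphSim G) b) :
    Quot.mk (GraphSim G) (θ a) = Quot.mk (GraphSim G) (θ b) :=
  (mk_eq_iff G).2 (sim_map G θ hθ ((mk_eq_iff G).1 h))

noncomputable def indPerm (θ : Equiv.Perm S) (hθ : θ ∈ GraphAut G) :
    Equiv.Perm (CoherentComponents G) where
  toFun := Quot.map θ (fun _ _ h => sim_map G θ hθ h)
  invFun := Quot.map (⇑θ⁻¹) (fun _ _ h => sim_map G θ⁻¹ ((GraphAut G).inv_mem hθ) h)
  left_inv := by
    intro q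
    induction q using Quot.ind with | _ a => ?_
    show Quot.mk (GraphSim G) (θ⁻¹ (θ a)) = Quot.mk (GraphSim G) a
    exact congrArg _ (θ.symm_apply_apply a)
  right_inv := by
    intro q
    induction q using Quot.ind with | _ a => ?_
    show Quot.mk (GraphSim G) (θ (θ⁻¹ a)) = Quot.mk (GraphSim G) a
    exact congrArg _ (θ.apply_symm_apply a)

theorem quotAdj_map_dir (θ : Equiv.Perm S) (hθ : θ ∈ GraphAut G) {a b : S}
    (h : QuotAdj G (Quot.mk (GraphSim G) a) (Quot.mk (GraphSim G) b)) :
    QuotAdj G (Quot.mk (GraphSim G) (θ a)) (Quot.mk (GraphSim G) (θ b)) := by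
  rcases h with ⟨a', b', h1, h2, hadj⟩
  exact ⟨θ a', θ b', mk_map_eq G θ hθ h1, mk_map_eq G θ hθ h2, (hθ a' b').2 hadj⟩

theorem indPerm_mem (θ : Equiv.Perm S) (hθ : θ ∈ GraphAut G) :
    indPerm G θ hθ ∈ QuotGraphAut G := by
  constructor
  · intro x y
    induction x using Quot.ind with | _ a => ?_
    induction y using Quot.ind with | _ b => ?_
    show QuotAdj G (Quot.mk (GraphSim G) (θ a)) (Quot.mk (GraphSim G) (θ b)) ↔ _
    constructor
    · intro h
      have := quotAdj_map_dir G θ⁻¹ ((GraphAut G).inv_mem hθ) h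
      simpa using this
    · exact quotAdj_map_dir G θ hθ
  · intro x
    induction x using Quot.ind with | _ a => ?_
    show QuotWeight G (Quot.mk (GraphSim G) (θ a)) = QuotWeight G (Quot.mk (GraphSim G) a)
    have key : ∀ s : S, Quot.mk (GraphSim G) s = Quot.mk (GraphSim G) a ↔
        Quot.mk (GraphSim G) (θ s) = Quot.mk (GraphSim G) (θ a) := by
      intro s
      constructor
      · exact mk_map_eq G θ hθ
      · intro h
        have := mk_map_eq G θ⁻¹ ((GraphAut G).inv_mem hθ) h
        simpa using this
    exact (Nat.card_congr (θ.subtypeEquiv key)).symm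

end Induced

end QGS

/-- the short exact sequence
`1 → ∏_{λ∈Λ} Perm(λ) → Aut(Γ) → Aut(Γ̄) → 1` is right-split: there is a group homomorphism
`r : Aut(Γ̄) → Aut(Γ)` with `θ̄ ∘ r = id` (i.e. `r φ` induces `φ` on coherent components);
consequently every `θ ∈ Aut(Γ)` factors uniquely as `n * r φ` with `n` in the kernel
`∏_{λ∈Λ} Perm(λ)`, so `Aut(Γ) ≅ (∏_{λ∈Λ} Perm(λ)) ⋊ Aut(Γ̄)`.  Moreover `r` can be chosen
so that whenever `φ` fixes a coherent component, `r φ` is the identity on that component. -/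
theorem quotient_graph_sequence_right_split (S : Type) [Fintype S] (G : SimpleGraph S) :
    ∃ r : (QuotGraphAut G) →* (GraphAut G),
      (∀ φ : QuotGraphAut G, Induces G ((r φ) : Equiv.Perm S) (φ : Equiv.Perm (CoherentComponents G))) ∧
      (∀ φ : QuotGraphAut G, ∀ a : S,
        (φ : Equiv.Perm (CoherentComponents G)) (Quot.mk (GraphSim G) a) = Quot.mk (GraphSim G) a →
        ((r φ) : Equiv.Perm S) a = a) ∧
      (∀ θ : GraphAut G,
        ∃! p : {n : GraphAut G // ∀ a : S, GraphSim G ((n : Equiv.Perm S) a) a} × QuotGraphAut G,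
          θ = (p.1 : GraphAut G) * r p.2) := by
  classical
  refine ⟨QGS.r G, fun φ a => (QGS.mk_fφ G φ a).symm, fun φ a h => QGS.fφ_fixed G φ a h, ?_⟩
  intro θ
  set φθ : QuotGraphAut G := ⟨QGS.indPerm G θ.val θ.prop, QGS.indPerm_mem G θ.val θ.prop⟩
    with hφθ
  have hind : ∀ a : S, (φθ : Equiv.Perm (CoherentComponents G)) (Quot.mk (GraphSim G) a)
      = Quot.mk (GraphSim G) ((θ : Equiv.Perm S) a) := fun a => rfl
  have hker : ∀ a : S, GraphSim G (((θ * (QGS.r G φθ)⁻¹ : GraphAut G) : Equiv.Perm S) a) a := by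
    intro a
    set b : S := (((QGS.r G φθ : GraphAut G) : Equiv.Perm S))⁻¹ a with hb
    have hval : ((θ * (QGS.r G φθ)⁻¹ : GraphAut G) : Equiv.Perm S) a
        = (θ : Equiv.Perm S) b := by
      rw [hb]
      simp only [Subgroup.coe_mul, Subgroup.coe_inv, Equiv.Perm.mul_apply]
    have hba : QGS.fφ G φθ b = a := by
      rw [← QGS.r_apply, hb]
      exact Equiv.apply_symm_apply _ a
    have h1 : Quot.mk (GraphSim G) ((θ : Equiv.Perm S) b) = Quot.mk (GraphSim G) a := by
      rw [← hba]
      exact (hind b).symm.trans (QGS.mk_fφ G φθ b).symm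
    rw [hval]
    exact (QGS.mk_eq_iff G).1 h1
  refine ⟨⟨⟨θ * (QGS.r G φθ)⁻¹, hker⟩, φθ⟩, ?_, ?_⟩
  · show θ = (θ * (QGS.r G φθ)⁻¹) * QGS.r G φθ
    rw [inv_mul_cancel_right]
  · rintro ⟨⟨n', hn'⟩, φ'⟩ hp
    simp only at hp
    have hφ' : φ' = φθ := by
      apply Subtype.ext; apply Equiv.ext
      intro x
      induction x using Quot.ind with | _ a => ?_
      have h1 : (θ : Equiv.Perm S) a = (n' : Equiv.Perm S) (QGS.fφ G φ' a) := by
        rw [hp]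
        simp only [Subgroup.coe_mul, Equiv.Perm.mul_apply]
        rfl
      calc (φ' : Equiv.Perm (CoherentComponents G)) (Quot.mk (GraphSim G) a)
          = (id (Quot.mk (GraphSim G) (QGS.fφ G φ' a)) : CoherentComponents G) := (QGS.mk_fφ G φ' a).symm
        _ = (id (Quot.mk (GraphSim G) ((n' : Equiv.Perm S) (QGS.fφ G φ' a))) : CoherentComponents G) :=
            ((QGS.mk_eq_iff G).2 (hn' _)).symm
        _ = (id (Quot.mk (GraphSim G) ((θ : Equiv.Perm S) a)) : CoherentComponents G) := by rw [h1]
        _ = (φθ : Equiv.Perm (CoherentComponents G)) (Quot.mk (GraphSim G) a) :=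
            (hind a).symm
    have hn : n' = θ * (QGS.r G φθ)⁻¹ := by
      rw [hp, hφ', mul_inv_cancel_right]
    refine Prod.ext ?_ hφ'
    exact Subtype.ext hn
end

section
/- Let L/K be a Galois extension, A a finite group with trivial Gal(L/K)-action acting on {1,…,n}, and G_1,…,G_n Gal(L/K)-groups with G_i = G_j whenever j ∈ A·i. Endow (∏_{i=1}^n G_i) ⋊ A with the Galois action ^σ(g,a) = (^σg, a). If H¹(L/N, G_i) is trivial for every finite-degree intermediate extension N of L/K and every i, then the map ι_* : H¹(L/K, A) → H¹(L/K, (∏ G_i) ⋊ A) induced by the inclusion a ↦ ((1,…,1),a) is a bijection, with inverse induced by the projection onto A. -/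
set_option linter.unusedSectionVars false
set_option maxHeartbeats 1000000


/-- A (continuous, nonabelian) 1-cocycle of a topological group `Γ` acting on a group `M`
(the action given by `act : Γ →* MulAut M`, `M` discrete):
`ρ (σ * τ) = ρ σ * σ • (ρ τ)` together with continuity (open fibers). -/
def IsGalCocycle {Γ M : Type} [Group Γ] [TopologicalSpace Γ] [Group M]
    (act : Γ →* MulAut M) (ρ : Γ → M) : Prop :=
  (∀ σ τ : Γ, ρ (σ * τ) = ρ σ * act σ (ρ τ)) ∧ ∀ m : M, IsOpen {σ : Γ | ρ σ = m}

/-- Cohomological equivalence of 1-cocycles: `η σ = m * ρ σ * (σ • m)⁻¹` for some `m`. -/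
def GalCocycleRel {Γ M : Type} [Group Γ] [Group M]
    (act : Γ →* MulAut M) (ρ η : Γ → M) : Prop :=
  ∃ m : M, ∀ σ : Γ, m * ρ σ * (act σ m)⁻¹ = η σ

/-- Restriction homomorphism `Gal(L/N) → Gal(L/K)` for an intermediate field `N`. -/
def galRes {K L : Type} [Field K] [Field L] [Algebra K L]
    (N : IntermediateField K L) : (L ≃ₐ[N] L) →* (L ≃ₐ[K] L) where
  toFun σ := σ.restrictScalars K
  map_one' := rfl
  map_mul' _ _ := rfl

/-- The componentwise Galois action on the product `∏ i, G i`. -/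
def galProdAct {Γ : Type} [Group Γ] {n : ℕ} {G : Fin n → Type} [∀ i, Group (G i)]
    (actG : ∀ i, Γ →* MulAut (G i)) : Γ →* MulAut (∀ i, G i) where
  toFun σ :=
    { toFun := fun g i => actG i σ (g i)
      invFun := fun g i => actG i σ⁻¹ (g i)
      left_inv := by intro g; funext i; simp
      right_inv := by intro g; funext i; simp
      map_mul' := by intro g h; funext i; simp }
  map_one' := by ext g i; simp
  map_mul' := by intro σ τ; ext g i; simp

/-- The Galois action on the semidirect product `(∏ i, G i) ⋊[φ] A`, acting trivially on `A`,
assuming the actions of `Γ` and `A` on the product commute. -/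
def galSDAct {Γ : Type} [Group Γ] {n : ℕ} {G : Fin n → Type} [∀ i, Group (G i)]
    (actG : ∀ i, Γ →* MulAut (G i)) {A : Type} [Group A] (φ : A →* MulAut (∀ i, G i))
    (hcomm : ∀ (σ : Γ) (a : A) (g : ∀ i, G i),
      galProdAct actG σ (φ a g) = φ a (galProdAct actG σ g)) :
    Γ →* MulAut ((∀ i, G i) ⋊[φ] A) where
  toFun σ :=
    { toFun := fun x => ⟨galProdAct actG σ x.left, x.right⟩
      invFun := fun x => ⟨galProdAct actG σ⁻¹ x.left, x.right⟩
      left_inv := by intro x; ext <;> simp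
      right_inv := by intro x; ext <;> simp
      map_mul' := by
        intro x y
        ext
        · simp [SemidirectProduct.mul_left, hcomm]
        · simp [SemidirectProduct.mul_right] }
  map_one' := by ext x <;> simp
  map_mul' := by intro σ τ; ext x <;> simp

/-! ### Auxiliary lemmas -/

section Helpers

theorem castSelf {α : Type} (h : α = α) (a : α) : cast h a = a := eq_of_heq (cast_heq h a)

theorem castInjective {α β : Type} (h : α = β) : Function.Injective (cast h) := by
  subst h; intro a b hab; simpa using hab

theorem castFun {n : ℕ} {G : Fin n → Type} {x y z : Fin n} (p : x = y) (h : G x = G z)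
    (h' : G y = G z) (w : ∀ k, G k) : cast h (w x) = cast h' (w y) := by subst p; rfl

variable {n : ℕ} {G : Fin n → Type} [∀ i, Group (G i)] {A : Type} [Group A]
  [MulAction A (Fin n)]
  (hG : ∀ (a : A) (i : Fin n), G (a • i) = G i)

/-- Type equality between orbit-related components. -/
def mkE (a : A) {x y : Fin n} (q : a • x = y) : G x = G y :=
  (hG a x).symm.trans (congrArg G q)

theorem castMul
    (hGmul : ∀ (a : A) (i : Fin n) (x y : G (a • i)),
      cast (hG a i) (x * y) = cast (hG a i) x * cast (hG a i) y)
    {x y : Fin n} (a : A) (q : a • x = y) (h : G x = G y) (u v : G x) :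
    cast h (u * v) = cast h u * cast h v := by
  subst q
  have h2 := hGmul a x (cast h u) (cast h v)
  have rt : ∀ w : G x, cast (hG a x) (cast h w) = w := fun w => by
    rw [cast_cast]; exact castSelf _ _
  rw [rt, rt] at h2
  apply castInjective (hG a x)
  rw [rt, h2]

theorem castOne
    (hGmul : ∀ (a : A) (i : Fin n) (x y : G (a • i)),
      cast (hG a i) (x * y) = cast (hG a i) x * cast (hG a i) y)
    {x y : Fin n} (a : A) (q : a • x = y) (h : G x = G y) :
    cast h (1 : G x) = 1 := by
  have h2 := castMul hG hGmul a q h 1 1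
  rw [mul_one] at h2
  exact (left_eq_mul.mp h2)

theorem castInv
    (hGmul : ∀ (a : A) (i : Fin n) (x y : G (a • i)),
      cast (hG a i) (x * y) = cast (hG a i) x * cast (hG a i) y)
    {x y : Fin n} (a : A) (q : a • x = y) (h : G x = G y) (u : G x) :
    cast h u⁻¹ = (cast h u)⁻¹ := by
  have h2 := castMul hG hGmul a q h u⁻¹ u
  rw [inv_mul_cancel, castOne hG hGmul a q h] at h2
  exact eq_inv_of_mul_eq_one_left h2.symm

theorem castAct {Γ : Type} [Group Γ] (actG : ∀ i, Γ →* MulAut (G i))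
    (hGact : ∀ (a : A) (i : Fin n) (σ : Γ) (x : G (a • i)),
      cast (hG a i) (actG (a • i) σ x) = actG i σ (cast (hG a i) x))
    {x y : Fin n} (a : A) (q : a • x = y) (h : G x = G y) (σ : Γ) (u : G x) :
    cast h (actG x σ u) = actG y σ (cast h u) := by
  subst q
  have rt : ∀ w : G x, cast (hG a x) (cast h w) = w := fun w => by
    rw [cast_cast]; exact castSelf _ _
  apply castInjective (hG a x)
  rw [rt, hGact a x σ (cast h u), rt]

end Helpers

section SDHelpers

variable {Γ : Type} [Group Γ] {n : ℕ} {G : Fin n → Type} [∀ i, Group (G i)]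
  {A : Type} [Group A] (actG : ∀ i, Γ →* MulAut (G i)) (φ : A →* MulAut (∀ i, G i))
  (hcomm : ∀ (σ : Γ) (a : A) (g : ∀ i, G i),
    galProdAct actG σ (φ a g) = φ a (galProdAct actG σ g))

theorem galProdAct_apply (σ : Γ) (g : ∀ i, G i) (i : Fin n) :
    galProdAct actG σ g i = actG i σ (g i) := rfl

theorem galSDAct_left (σ : Γ) (x : (∀ i, G i) ⋊[φ] A) :
    (galSDAct actG φ hcomm σ x).left = galProdAct actG σ x.left := rfl

theorem galSDAct_right (σ : Γ) (x : (∀ i, G i) ⋊[φ] A) :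
    (galSDAct actG φ hcomm σ x).right = x.right := rfl

end SDHelpers

lemma galRes_continuous {K L : Type} [Field K] [Field L] [Algebra K L]
    (N : IntermediateField K L) : Continuous (galRes N) := by
  apply continuous_of_continuousAt_one (galRes N)
  unfold ContinuousAt
  rw [map_one, Filter.tendsto_def]
  intro U hU
  rw [krullTopology_mem_nhds_one_iff] at hU ⊢
  obtain ⟨E, hEfin, hEU⟩ := hU
  have hfg : E.FG := by
    have : FiniteDimensional K E := hEfin
    apply E.fg_of_fg_toSubalgebra
    apply Subalgebra.fg_of_fg_toSubmodule
    exact (Submodule.fg_iff_finiteDimensional _).mpr this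
  obtain ⟨t, htfin, htE⟩ := IntermediateField.fg_def.mp hfg
  have htfin' : Finite t := htfin
  have hint : ∀ x ∈ t, IsIntegral N x := by
    intro x hx
    have hxE : x ∈ E := htE ▸ IntermediateField.subset_adjoin K t hx
    have h1 : IsIntegral K x := by
      have : FiniteDimensional K E := hEfin
      have := IntermediateField.isIntegral_iff.mp (IsIntegral.of_finite K (⟨x, hxE⟩ : E))
      exact this
    exact h1.tower_top
  refine ⟨IntermediateField.adjoin N t, IntermediateField.finiteDimensional_adjoin hint, ?_⟩
  intro τ hτ
  apply hEU
  rw [SetLike.mem_coe, IntermediateField.mem_fixingSubgroup_iff] at hτ ⊢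
  intro x hxE
  have hle : E ≤ (IntermediateField.adjoin N t).restrictScalars K := by
    rw [← htE, IntermediateField.adjoin_le_iff]
    intro y hy
    exact IntermediateField.subset_adjoin N t hy
  exact hτ x (hle hxE)

lemma openSubgroup_eq_fixingSubgroup {K L : Type} [Field K] [Field L] [Algebra K L]
    [IsGalois K L] (H : Subgroup (L ≃ₐ[K] L)) (hH : IsOpen (H : Set (L ≃ₐ[K] L))) :
    ∃ N : IntermediateField K L, FiniteDimensional K N ∧ N.fixingSubgroup = H := by
  have h1 : (H : Set (L ≃ₐ[K] L)) ∈ nhds (1 : L ≃ₐ[K] L) := hH.mem_nhds H.one_mem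
  rw [krullTopology_mem_nhds_one_iff] at h1
  obtain ⟨E, hEfin, hEH⟩ := h1
  have : FiniteDimensional K E := hEfin
  set E' : IntermediateField K L := IntermediateField.normalClosure K E L with hE'
  have hE'fin : FiniteDimensional K E' := normalClosure.is_finiteDimensional K E L
  have hE'norm : Normal K E' := normalClosure.normal K E L
  set π : (L ≃ₐ[K] L) →* (E' ≃ₐ[K] E') := AlgEquiv.restrictNormalHom E'
  have hker : π.ker = E'.fixingSubgroup := IntermediateField.restrictNormalHom_ker E'
  have hker_le : E'.fixingSubgroup ≤ H := by
    refine le_trans ?_ hEH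
    exact IntermediateField.fixingSubgroup_antitone (IntermediateField.le_normalClosure E)
  set Hbar : Subgroup (E' ≃ₐ[K] E') := H.map π with hHbar
  set N : IntermediateField K L := (IntermediateField.fixedField Hbar).map E'.val with hN
  haveI h1 : FiniteDimensional K {x : ↥E' // x ∈ IntermediateField.fixedField Hbar} := by
    infer_instance
  have hNfin : FiniteDimensional K N :=
    LinearEquiv.finiteDimensional
      (IntermediateField.liftAlgEquiv (IntermediateField.fixedField Hbar)).toLinearEquiv
  refine ⟨N, hNfin, ?_⟩
  ext σ
  rw [IntermediateField.mem_fixingSubgroup_iff]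
  constructor
  · intro hσ
    have hπσ : π σ ∈ Hbar := by
      rw [← IntermediateField.fixingSubgroup_fixedField Hbar]
      rw [IntermediateField.mem_fixingSubgroup_iff]
      intro y hy
      have hyN : (y : L) ∈ N := ⟨y, hy, rfl⟩
      exact Subtype.coe_injective
        ((AlgEquiv.restrictNormalHom_apply E' σ y).trans (hσ (y : L) hyN))
    obtain ⟨h, hhH, hπh⟩ := hπσ
    have hmem : h⁻¹ * σ ∈ π.ker := by
      rw [MonoidHom.mem_ker, map_mul, map_inv, hπh, inv_mul_cancel]
    have : h⁻¹ * σ ∈ H := hker_le (hker ▸ hmem)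
    have := H.mul_mem hhH this
    rwa [mul_inv_cancel_left] at this
  · intro hσ x hx
    obtain ⟨y, hy, rfl⟩ := hx
    have hπσ : π σ ∈ Hbar := ⟨σ, hσ, rfl⟩
    have : (π σ) y = y := hy ⟨π σ, hπσ⟩
    have h2 : ((π σ) y : L) = σ (y : L) := AlgEquiv.restrictNormalHom_apply E' σ y
    rw [this] at h2
    exact h2.symm

section LemB

variable {K L : Type} [Field K] [Field L] [Algebra K L] [IsGalois K L]
    {n : ℕ} {A : Type} [Group A] [MulAction A (Fin n)]
    {G : Fin n → Type} [∀ i, Group (G i)]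
    (actG : ∀ i, (L ≃ₐ[K] L) →* MulAut (G i))
    (hG : ∀ (a : A) (i : Fin n), G (a • i) = G i)

lemma exists_local_coboundary
    (htriv : ∀ N : IntermediateField K L, FiniteDimensional K N → ∀ i : Fin n,
      ∀ ρ : (L ≃ₐ[N] L) → G i,
        IsGalCocycle ((actG i).comp (galRes N)) ρ →
        GalCocycleRel ((actG i).comp (galRes N)) ρ (fun _ => 1))
    (r : (L ≃ₐ[K] L) → A) (f : (L ≃ₐ[K] L) → ∀ i, G i)
    (hr : ∀ σ τ, r (σ * τ) = r σ * r τ)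
    (hrfib : ∀ a : A, IsOpen {σ : L ≃ₐ[K] L | r σ = a})
    (hffib : ∀ (i : Fin n) (c : G i), IsOpen {σ : L ≃ₐ[K] L | f σ i = c})
    (hf : ∀ σ τ (j : Fin n), f (σ * τ) j
      = f σ j * cast (hG (r σ)⁻¹ j) (actG ((r σ)⁻¹ • j) σ (f τ ((r σ)⁻¹ • j))))
    (i : Fin n) :
    ∃ m : G i, ∀ σ, r σ • i = i → f σ i = m⁻¹ * actG i σ m := by
  have hone : r 1 = 1 := by
    have h1 := hr 1 1
    rw [mul_one] at h1
    exact (left_eq_mul.mp h1)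
  have hinv : ∀ σ, r σ⁻¹ = (r σ)⁻¹ := fun σ => by
    apply eq_inv_of_mul_eq_one_left
    rw [← hr, inv_mul_cancel, hone]
  set H : Subgroup (L ≃ₐ[K] L) :=
    { carrier := {σ | r σ • i = i}
      one_mem' := by simp [hone]
      mul_mem' := by
        intro a b ha hb
        simp only [Set.mem_setOf_eq] at *
        rw [hr, mul_smul, hb, ha]
      inv_mem' := by
        intro a ha
        simp only [Set.mem_setOf_eq] at *
        rw [hinv]
        exact inv_smul_eq_iff.mpr ha.symm } with hH
  have hHopen : IsOpen (H : Set (L ≃ₐ[K] L)) := by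
    have : (H : Set (L ≃ₐ[K] L)) = ⋃ (a : {a : A // a • i = i}), {σ | r σ = a.1} := by
      ext σ
      simp only [Set.mem_iUnion, Set.mem_setOf_eq]
      constructor
      · intro hσ; exact ⟨⟨r σ, hσ⟩, rfl⟩
      · rintro ⟨⟨a, ha⟩, h⟩
        show r σ • i = i
        rw [h]; exact ha
    rw [this]
    exact isOpen_iUnion fun a => hrfib a.1
  obtain ⟨N, hNfd, hNfix⟩ := openSubgroup_eq_fixingSubgroup H hHopen
  have hmemH : ∀ τ : L ≃ₐ[N] L, galRes N τ ∈ H := by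
    intro τ
    rw [← hNfix]
    intro x
    exact τ.commutes x
  have hstab : ∀ τ : L ≃ₐ[N] L, r (galRes N τ) • i = i := fun τ => hmemH τ
  set ρ' : (L ≃ₐ[N] L) → G i := fun τ => f (galRes N τ) i with hρ'
  have hcoc' : IsGalCocycle ((actG i).comp (galRes N)) ρ' := by
    constructor
    · intro τ₁ τ₂
      show f (galRes N τ₁ * galRes N τ₂) i = _
      rw [hf]
      have hp : (r (galRes N τ₁))⁻¹ • i = i := inv_smul_eq_iff.mpr (hstab τ₁).symm
      rw [castFun hp (hG (r (galRes N τ₁))⁻¹ i) rfl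
        (fun k => actG k (galRes N τ₁) (f (galRes N τ₂) k)), castSelf]
      rfl
    · intro c
      exact (hffib i c).preimage (galRes_continuous N)
  obtain ⟨m, hm⟩ := htriv N hNfd i ρ' hcoc'
  refine ⟨m, fun σ hσ => ?_⟩
  have hσ' : σ ∈ N.fixingSubgroup := by rw [hNfix]; exact hσ
  set τ : L ≃ₐ[N] L := N.fixingSubgroupEquiv ⟨σ, hσ'⟩ with hτdef
  have hτ : galRes N τ = σ := by ext x; rfl
  have h2 := hm τ
  rw [MonoidHom.comp_apply, hτ] at h2
  have h3 : m * ρ' τ = actG i σ m := by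
    have := mul_inv_eq_one.mp h2
    simpa using this
  have h4 : ρ' τ = f σ i := by rw [hρ']; simp only; rw [hτ]
  rw [h4] at h3
  rw [eq_inv_mul_iff_mul_eq]
  exact h3

end LemB

/-- Let `L/K` be Galois, `A` a finite group with trivial Galois action acting on
`{1,…,n}`, and `G i` Galois groups with `G (a • i) = G i` (the identifications being
compatible with multiplication and the Galois actions).  Endow `(∏ i, G i) ⋊ A` with the
Galois action `^σ(g, a) = (^σ g, a)`.  If `H¹(L/N, G i)` is trivial for every
finite-degree intermediate extension `N` and every `i`, then
`ι⁎ : H¹(L/K, A) → H¹(L/K, (∏ G i) ⋊ A)` is a bijection with inverse `π⁎`: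
`ι∘ρ` is a cocycle whenever `ρ` is, `π∘ρ` is a cocycle whenever `ρ` is, every cocycle `ρ`
of the semidirect product is equivalent to `ι∘π∘ρ` (surjectivity and right-inverse), and
`ι⁎` is injective on cohomology classes. -/


theorem galois_cohomology_semidirect_product
    (K L : Type) [Field K] [Field L] [Algebra K L] [IsGalois K L]
    (n : ℕ) (A : Type) [Group A] [Fintype A] [MulAction A (Fin n)]
    (G : Fin n → Type) [∀ i, Group (G i)]
    (actG : ∀ i, (L ≃ₐ[K] L) →* MulAut (G i))
    (hG : ∀ (a : A) (i : Fin n), G (a • i) = G i)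
    (hGmul : ∀ (a : A) (i : Fin n) (x y : G (a • i)),
      cast (hG a i) (x * y) = cast (hG a i) x * cast (hG a i) y)
    (hGact : ∀ (a : A) (i : Fin n) (σ : L ≃ₐ[K] L) (x : G (a • i)),
      cast (hG a i) (actG (a • i) σ x) = actG i σ (cast (hG a i) x))
    (φ : A →* MulAut (∀ i, G i))
    (hφ : ∀ (a : A) (g : ∀ i, G i) (i : Fin n), φ a g i = cast (hG a⁻¹ i) (g (a⁻¹ • i)))
    (hcomm : ∀ (σ : L ≃ₐ[K] L) (a : A) (g : ∀ i, G i),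
      galProdAct actG σ (φ a g) = φ a (galProdAct actG σ g))
    (htriv : ∀ N : IntermediateField K L, FiniteDimensional K N → ∀ i : Fin n,
      ∀ ρ : (L ≃ₐ[N] L) → G i,
        IsGalCocycle ((actG i).comp (galRes N)) ρ →
        GalCocycleRel ((actG i).comp (galRes N)) ρ (fun _ => 1)) :
    (∀ ρ : (L ≃ₐ[K] L) → A, IsGalCocycle (1 : (L ≃ₐ[K] L) →* MulAut A) ρ →
      IsGalCocycle (galSDAct actG φ hcomm) (fun σ => SemidirectProduct.inr (ρ σ))) ∧
    (∀ ρ : (L ≃ₐ[K] L) → (∀ i, G i) ⋊[φ] A, IsGalCocycle (galSDAct actG φ hcomm) ρ →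
      IsGalCocycle (1 : (L ≃ₐ[K] L) →* MulAut A) (fun σ => (ρ σ).right)) ∧
    (∀ ρ : (L ≃ₐ[K] L) → (∀ i, G i) ⋊[φ] A, IsGalCocycle (galSDAct actG φ hcomm) ρ →
      GalCocycleRel (galSDAct actG φ hcomm) ρ (fun σ => SemidirectProduct.inr (ρ σ).right)) ∧
    (∀ ρ η : (L ≃ₐ[K] L) → A,
      IsGalCocycle (1 : (L ≃ₐ[K] L) →* MulAut A) ρ →
      IsGalCocycle (1 : (L ≃ₐ[K] L) →* MulAut A) η →
      GalCocycleRel (galSDAct actG φ hcomm)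
        (fun σ => SemidirectProduct.inr (ρ σ)) (fun σ => SemidirectProduct.inr (η σ)) →
      GalCocycleRel (1 : (L ≃ₐ[K] L) →* MulAut A) ρ η) := by
  refine ⟨?_, ?_, ?_, ?_⟩
  -- Part 1: `ι ∘ ρ` is a cocycle
  · rintro ρ ⟨h1, h2⟩
    constructor
    · intro σ τ
      have hρ : ρ (σ * τ) = ρ σ * ρ τ := by
        have := h1 σ τ
        simpa using this
      show (SemidirectProduct.inr (ρ (σ * τ)) : (∀ i, G i) ⋊[φ] A)
        = SemidirectProduct.inr (ρ σ)
          * galSDAct actG φ hcomm σ (SemidirectProduct.inr (ρ τ))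
      rw [hρ]
      have hfix : galSDAct actG φ hcomm σ (SemidirectProduct.inr (ρ τ))
          = SemidirectProduct.inr (ρ τ) := by
        apply SemidirectProduct.ext
        · show galProdAct actG σ (1 : ∀ i, G i) = 1
          exact map_one _
        · rfl
      rw [hfix, map_mul]
    · intro x
      by_cases h : ∃ a : A, SemidirectProduct.inr a = x
      · obtain ⟨a, rfl⟩ := h
        have hset : {σ : L ≃ₐ[K] L |
            (SemidirectProduct.inr (ρ σ) : (∀ i, G i) ⋊[φ] A) = SemidirectProduct.inr a}
            = {σ | ρ σ = a} := by
          ext σ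
          simp only [Set.mem_setOf_eq]
          exact ⟨fun hh => SemidirectProduct.inr_injective hh,
            fun hh => congrArg SemidirectProduct.inr hh⟩
        show IsOpen {σ : L ≃ₐ[K] L |
          (SemidirectProduct.inr (ρ σ) : (∀ i, G i) ⋊[φ] A) = SemidirectProduct.inr a}
        rw [hset]
        exact h2 a
      · have hset : {σ : L ≃ₐ[K] L |
            (SemidirectProduct.inr (ρ σ) : (∀ i, G i) ⋊[φ] A) = x} = ∅ := by
          ext σ
          simp only [Set.mem_setOf_eq, Set.mem_empty_iff_false, iff_false]
          intro hc
          exact h ⟨ρ σ, hc⟩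
        show IsOpen {σ : L ≃ₐ[K] L | (SemidirectProduct.inr (ρ σ) : (∀ i, G i) ⋊[φ] A) = x}
        rw [hset]
        exact isOpen_empty
  -- Part 2: `π ∘ ρ` is a cocycle
  · rintro ρ ⟨h1, h2⟩
    constructor
    · intro σ τ
      have := congrArg SemidirectProduct.right (h1 σ τ)
      simpa [SemidirectProduct.mul_right, galSDAct_right] using this
    · intro a
      have hset : {σ : L ≃ₐ[K] L | (ρ σ).right = a}
          = ⋃ (x : {x : (∀ i, G i) ⋊[φ] A // x.right = a}), {σ | ρ σ = x.1} := by
        ext σ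
        simp only [Set.mem_iUnion, Set.mem_setOf_eq]
        constructor
        · intro hσ; exact ⟨⟨ρ σ, hσ⟩, rfl⟩
        · rintro ⟨⟨x, hx⟩, h⟩
          show (ρ σ).right = a
          rw [h]; exact hx
      show IsOpen {σ : L ≃ₐ[K] L | (ρ σ).right = a}
      rw [hset]
      exact isOpen_iUnion fun x => h2 x.1
  -- Part 3: every cocycle is equivalent to `ι ∘ π ∘ ρ`
  · rintro ρ ⟨hcoc, hcont⟩
    classical
    set f : (L ≃ₐ[K] L) → ∀ i, G i := fun σ => (ρ σ).left with hfdef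
    set r : (L ≃ₐ[K] L) → A := fun σ => (ρ σ).right with hrdef
    have hr : ∀ σ τ, r (σ * τ) = r σ * r τ := by
      intro σ τ
      have := congrArg SemidirectProduct.right (hcoc σ τ)
      simpa [SemidirectProduct.mul_right, galSDAct_right] using this
    have hone : r 1 = 1 := by
      have h1 := hr 1 1
      rw [mul_one] at h1
      exact left_eq_mul.mp h1
    have hinv : ∀ σ, r σ⁻¹ = (r σ)⁻¹ := fun σ => by
      apply eq_inv_of_mul_eq_one_left
      rw [← hr, inv_mul_cancel, hone]
    have hf : ∀ σ τ (j : Fin n), f (σ * τ) j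
        = f σ j * cast (hG (r σ)⁻¹ j) (actG ((r σ)⁻¹ • j) σ (f τ ((r σ)⁻¹ • j))) := by
      intro σ τ j
      have h := congrArg (fun x : (∀ i, G i) ⋊[φ] A => x.left j) (hcoc σ τ)
      simp only [SemidirectProduct.mul_left, Pi.mul_apply] at h
      rw [hφ] at h
      exact h
    have hrfib : ∀ a : A, IsOpen {σ : L ≃ₐ[K] L | r σ = a} := by
      intro a
      have hset : {σ : L ≃ₐ[K] L | r σ = a}
          = ⋃ (x : {x : (∀ i, G i) ⋊[φ] A // x.right = a}), {σ | ρ σ = x.1} := by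
        ext σ
        simp only [Set.mem_iUnion, Set.mem_setOf_eq]
        constructor
        · intro hσ; exact ⟨⟨ρ σ, hσ⟩, rfl⟩
        · rintro ⟨⟨x, hx⟩, h⟩
          show (ρ σ).right = a
          rw [h]; exact hx
      rw [hset]
      exact isOpen_iUnion fun x => hcont x.1
    have hffib : ∀ (i : Fin n) (c : G i), IsOpen {σ : L ≃ₐ[K] L | f σ i = c} := by
      intro i c
      have hset : {σ : L ≃ₐ[K] L | f σ i = c}
          = ⋃ (x : {x : (∀ i, G i) ⋊[φ] A // x.left i = c}), {σ | ρ σ = x.1} := by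
        ext σ
        simp only [Set.mem_iUnion, Set.mem_setOf_eq]
        constructor
        · intro hσ; exact ⟨⟨ρ σ, hσ⟩, rfl⟩
        · rintro ⟨⟨x, hx⟩, h⟩
          show (ρ σ).left i = c
          rw [h]; exact hx
      rw [hset]
      exact isOpen_iUnion fun x => hcont x.1
    choose m₀ hm₀ using fun i =>
      exists_local_coboundary actG hG htriv r f hr hrfib hffib hf i
    -- orbit representatives
    let pre : Setoid (Fin n) :=
      ⟨fun x y => ∃ σ : L ≃ₐ[K] L, r σ • y = x,
        ⟨fun x => ⟨1, by rw [hone, one_smul]⟩,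
        by
          rintro x y ⟨σ, h⟩
          exact ⟨σ⁻¹, by rw [hinv, ← h, inv_smul_smul]⟩,
        by
          rintro x y z ⟨σ, h⟩ ⟨τ, k⟩
          exact ⟨σ * τ, by rw [hr, mul_smul, k, h]⟩⟩⟩
    set rep : Fin n → Fin n := fun j => (Quotient.mk pre j).out with hrepdef
    have hselspec : ∀ j, ∃ σ : L ≃ₐ[K] L, r σ • rep j = j := by
      intro j
      have h1 : Quotient.mk pre (rep j) = Quotient.mk pre j := Quotient.out_eq _
      obtain ⟨σ, hσ⟩ := Quotient.exact h1
      exact ⟨σ⁻¹, by rw [hinv, ← hσ, inv_smul_smul]⟩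
    choose sel hsel using hselspec
    have hrep : ∀ (σ : L ≃ₐ[K] L) (j : Fin n), rep ((r σ)⁻¹ • j) = rep j := by
      intro σ j
      apply congrArg Quotient.out
      apply Quotient.sound
      exact ⟨σ⁻¹, by rw [hinv]⟩
    set g : ∀ j, G j := fun j =>
      cast (mkE hG (r (sel j)) (hsel j)) (actG (rep j) (sel j) (m₀ (rep j)))
        * (f (sel j) j)⁻¹ with hgdef
    have hkey : ∀ (j : Fin n) (σ : L ≃ₐ[K] L) (x : Fin n), x = rep j →
        ∀ (hσ : r σ • x = j) (e : G x = G j),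
        g j = cast e (actG x σ (m₀ x)) * (f σ j)⁻¹ := by
      intro j σ x hx
      subst hx
      intro hσ e
      have hsj := hsel j
      have hh : r ((sel j)⁻¹ * σ) • rep j = rep j := by
        rw [hr, hinv, mul_smul, hσ]
        exact inv_smul_eq_iff.mpr hsj.symm
      have h0 : σ = sel j * ((sel j)⁻¹ * σ) := by group
      have hcompose : actG (rep j) (sel j) (actG (rep j) ((sel j)⁻¹ * σ) (m₀ (rep j)))
          = actG (rep j) σ (m₀ (rep j)) := by
        rw [← MulAut.mul_apply, ← map_mul]
        congr 1
        group
      have hfs : f σ j = f (sel j) j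
          * ((cast e (actG (rep j) (sel j) (m₀ (rep j))))⁻¹
            * cast e (actG (rep j) σ (m₀ (rep j)))) := by
        conv_lhs => rw [h0, hf]
        congr 1
        have hp : (r (sel j))⁻¹ • j = rep j := inv_smul_eq_iff.mpr hsj.symm
        rw [castFun hp (hG (r (sel j))⁻¹ j) e
          (fun k => actG k (sel j) (f ((sel j)⁻¹ * σ) k))]
        rw [hm₀ (rep j) ((sel j)⁻¹ * σ) hh]
        rw [map_mul, map_inv, hcompose]
        rw [castMul hG hGmul (r σ) hσ e, castInv hG hGmul (r σ) hσ e]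
      have hcc : cast (mkE hG (r (sel j)) (hsel j))
          (actG (rep j) (sel j) (m₀ (rep j)))
          = cast e (actG (rep j) (sel j) (m₀ (rep j))) := rfl
      show cast (mkE hG (r (sel j)) (hsel j)) (actG (rep j) (sel j) (m₀ (rep j)))
          * (f (sel j) j)⁻¹ = _
      rw [hcc, hfs]
      group
    have hmain : ∀ (σ : L ≃ₐ[K] L) (j : Fin n),
        g j * f σ j
          * (cast (hG (r σ)⁻¹ j) (actG ((r σ)⁻¹ • j) σ (g ((r σ)⁻¹ • j))))⁻¹ = 1 := by
      intro σ j
      have hrepj : rep ((r σ)⁻¹ • j) = rep j := hrep σ j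
      set j' := (r σ)⁻¹ • j with hj'
      set τ := sel j' with hτdef
      have hτ : r τ • rep j = j' := by rw [← hrepj]; exact hsel j'
      have hq : r σ • j' = j := smul_inv_smul _ _
      have e₁ : G (rep j) = G j' := mkE hG (r τ) hτ
      have e₂ : G j' = G j := hG (r σ)⁻¹ j
      have hgj' : g j' = cast e₁ (actG (rep j) τ (m₀ (rep j))) * (f τ j')⁻¹ :=
        hkey j' τ (rep j) hrepj.symm hτ e₁
      have hστ : r (σ * τ) • rep j = j := by rw [hr, mul_smul, hτ, hq]
      have hgj : g j = cast (e₁.trans e₂) (actG (rep j) (σ * τ) (m₀ (rep j)))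
          * (f (σ * τ) j)⁻¹ :=
        hkey j (σ * τ) (rep j) rfl hστ (e₁.trans e₂)
      have hfστ : f (σ * τ) j = f σ j * cast e₂ (actG j' σ (f τ j')) := hf σ τ j
      have hact : cast e₂ (actG j' σ (g j'))
          = cast (e₁.trans e₂) (actG (rep j) (σ * τ) (m₀ (rep j)))
            * (cast e₂ (actG j' σ (f τ j')))⁻¹ := by
        rw [hgj', map_mul, map_inv]
        rw [castMul hG hGmul (r σ) hq e₂, castInv hG hGmul (r σ) hq e₂]
        congr 1
        rw [← castAct hG actG hGact (r τ) hτ e₁ σ]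
        rw [cast_cast]
        congr 1
        rw [← MulAut.mul_apply, ← map_mul]
      show g j * f σ j * (cast e₂ (actG j' σ (g j')))⁻¹ = 1
      rw [hgj, hfστ, hact]
      group
    refine ⟨SemidirectProduct.inl g, fun σ => ?_⟩
    have hsd : galSDAct actG φ hcomm σ (SemidirectProduct.inl g)
        = SemidirectProduct.inl (galProdAct actG σ g) := by
      apply SemidirectProduct.ext
      · rfl
      · rfl
    rw [hsd, ← map_inv]
    apply SemidirectProduct.ext
    · show (SemidirectProduct.inl g * ρ σ
          * SemidirectProduct.inl (galProdAct actG σ g)⁻¹).left = (1 : ∀ i, G i)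
      rw [SemidirectProduct.mul_left, SemidirectProduct.mul_left]
      simp only [SemidirectProduct.left_inl, SemidirectProduct.right_inl,
        SemidirectProduct.mul_right, SemidirectProduct.right_inl, map_one,
        MulAut.one_apply, one_mul, mul_one]
      funext j
      simp only [Pi.mul_apply, Pi.one_apply]
      have h5 : φ ((ρ σ).right) ((galProdAct actG σ g)⁻¹) j
          = (cast (hG (r σ)⁻¹ j) (actG ((r σ)⁻¹ • j) σ (g ((r σ)⁻¹ • j))))⁻¹ := by
        rw [map_inv, Pi.inv_apply, hφ]
        rfl
      rw [h5]
      exact hmain σ j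
    · simp only [SemidirectProduct.mul_right, SemidirectProduct.right_inl,
        SemidirectProduct.right_inr, one_mul, inv_one, mul_one]
  -- Part 4: injectivity
  · rintro ρ η hρ hη ⟨m, hm⟩
    refine ⟨m.right, fun σ => ?_⟩
    have := congrArg SemidirectProduct.right (hm σ)
    simpa [SemidirectProduct.mul_right, galSDAct_right] using this
end

section
/- If a nilpotent Lie algebra n over a field of characteristic zero decomposes as n = h ⊕ k with h, k ideals, and the quotient n/γ_3(n) is indecomposable, then h = 0 or k = 0 (i.e., n is indecomposable). -/
/-- A Lie algebra is decomposable if it is the (internal) direct sum of two nonzero ideals. -/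
def LieDecomposable (K L : Type) [Field K] [LieRing L] [LieAlgebra K L] : Prop :=
  ∃ h k : LieIdeal K L, h ≠ ⊥ ∧ k ≠ ⊥ ∧ h ⊓ k = ⊥ ∧ h ⊔ k = ⊤

/-- if a nilpotent Lie algebra `n` over a field of characteristic zero
decomposes as `n = h ⊕ k` for ideals `h`, `k`, and the quotient `n/γ₃(n)` is
indecomposable, then `h = 0` or `k = 0` (note `γ₃(n) = lowerCentralSeries K n n 2` in
Mathlib's indexing). -/
theorem indecomposable_of_quotient_gamma3_indecomposable
    (K : Type) [Field K] [CharZero K] (n : Type) [LieRing n] [LieAlgebra K n]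
    [LieRing.IsNilpotent n]
    (h k : LieIdeal K n) (hinf : h ⊓ k = ⊥) (hsup : h ⊔ k = ⊤)
    (hquot : ¬ LieDecomposable K (n ⧸ LieModule.lowerCentralSeries K n n 2)) :
    h = ⊥ ∨ k = ⊥ := by
  by_contra hcon
  push_neg at hcon
  obtain ⟨hne, kne⟩ := hcon
  set I : LieIdeal K n := LieModule.lowerCentralSeries K n n 2 with hI
  -- brackets between h and k vanish
  have hk0 : ⁅h, k⁆ = (⊥ : LieIdeal K n) :=
    le_bot_iff.mp (hinf ▸ LieSubmodule.lie_le_inf h k)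
  have kh0 : ⁅k, h⁆ = (⊥ : LieIdeal K n) :=
    le_bot_iff.mp (hinf ▸ (inf_comm h k ▸ LieSubmodule.lie_le_inf k h))
  set A : LieIdeal K n := ⁅h, ⁅h, h⁆⁆ with hA
  set B : LieIdeal K n := ⁅k, ⁅k, k⁆⁆ with hB
  have hAh : A ≤ h := LieSubmodule.lie_le_left _ _
  have hBk : B ≤ k := LieSubmodule.lie_le_left _ _
  -- γ₂ = ⁅h,h⁆ ⊔ ⁅k,k⁆
  have hγ2 : LieModule.lowerCentralSeries K n n 1 = ⁅h, h⁆ ⊔ ⁅k, k⁆ := by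
    have : LieModule.lowerCentralSeries K n n 1 = ⁅(⊤ : LieIdeal K n), (⊤ : LieIdeal K n)⁆ := by
      rw [LieModule.lowerCentralSeries_succ, LieModule.lowerCentralSeries_zero]
    rw [this, ← hsup, LieSubmodule.sup_lie, LieSubmodule.lie_sup, LieSubmodule.lie_sup,
      hk0, kh0]
    simp
  -- I = γ₃ = A ⊔ B
  have hIAB : I = A ⊔ B := by
    have hcross1 : ⁅h, ⁅k, k⁆⁆ = (⊥ : LieIdeal K n) := by
      rw [eq_bot_iff, ← hinf]
      exact le_trans (LieSubmodule.lie_le_inf _ _)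
          (inf_le_inf_right _ (le_refl h) |>.trans
            (inf_le_inf le_rfl (LieSubmodule.lie_le_left k k)))
    have hcross2 : ⁅k, ⁅h, h⁆⁆ = (⊥ : LieIdeal K n) := by
      rw [eq_bot_iff, ← hinf]
      refine le_trans (LieSubmodule.lie_le_inf _ _) ?_
      rw [inf_comm]
      exact inf_le_inf (LieSubmodule.lie_le_left h h) le_rfl
    have : I = ⁅(⊤ : LieIdeal K n), LieModule.lowerCentralSeries K n n 1⁆ := by
      rw [hI, LieModule.lowerCentralSeries_succ]
    rw [this, hγ2, ← hsup, LieSubmodule.sup_lie, LieSubmodule.lie_sup, LieSubmodule.lie_sup,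
      hcross1, hcross2, hA, hB]
    simp
  -- elements of I split as A-part plus B-part
  have hsplit : ∀ x ∈ I, ∃ a ∈ A, ∃ b ∈ B, a + b = x := by
    intro x hx
    rw [hIAB, LieSubmodule.mem_sup] at hx
    exact hx
  -- the quotient map as a Lie algebra morphism
  let π : n →ₗ⁅K⁆ (n ⧸ I) :=
    { (I : Submodule K n).mkQ with
      map_lie' := fun {x y} => rfl }
  have hπsurj : Function.Surjective π := Submodule.mkQ_surjective _
  have hπ0 : ∀ x : n, π x = 0 ↔ x ∈ I := fun x => Submodule.Quotient.mk_eq_zero _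
  have hker : π.ker = I := by
    ext x
    rw [LieHom.mem_ker, hπ0]
  -- key: a nonzero ideal is not contained in I
  have hnotle : ∀ J : LieIdeal K n, J ≤ h → J ≠ ⊥ → ¬ J ≤ I → True := fun _ _ _ _ => trivial
  have key : ∀ J : LieIdeal K n, (∀ x ∈ J, ∀ hx' : x ∈ I,
      True) → True := fun _ _ => trivial
  have hhI : ¬ h ≤ I := by
    intro hle
    -- then h ≤ A ≤ ⁅⊤, h⁆, so h is contained in every term of the lcs
    have hhA : h ≤ A := by
      intro x hx
      obtain ⟨a, ha, b, hb, hab⟩ := hsplit x (hle hx)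
      have hbhk : b ∈ h ⊓ k := by
        constructor
        · have : b = x - a := by rw [← hab]; abel
          rw [this]
          exact h.sub_mem hx (hAh ha)
        · exact hBk hb
      rw [hinf] at hbhk
      have hb0 : b = 0 := hbhk
      rw [hb0, add_zero] at hab
      rw [← hab]; exact ha
    have hstep : h ≤ ⁅(⊤ : LieIdeal K n), h⁆ := by
      refine le_trans hhA ?_
      exact LieSubmodule.mono_lie le_top (LieSubmodule.lie_le_left h h)
    have hall : ∀ m, h ≤ LieModule.lowerCentralSeries K n n m := by
      intro m
      induction m with
      | zero => simp [LieModule.lowerCentralSeries_zero]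
      | succ m ih =>
        rw [LieModule.lowerCentralSeries_succ]
        exact le_trans hstep (LieSubmodule.mono_lie le_rfl ih)
    obtain ⟨m, hm⟩ := LieModule.IsNilpotent.nilpotent K n n
    exact hne (le_bot_iff.mp (hm ▸ hall m))
  have hkI : ¬ k ≤ I := by
    intro hle
    have hkB : k ≤ B := by
      intro x hx
      obtain ⟨a, ha, b, hb, hab⟩ := hsplit x (hle hx)
      have hahk : a ∈ h ⊓ k := by
        constructor
        · exact hAh ha
        · have : a = x - b := by rw [← hab]; abel
          rw [this]
          exact k.sub_mem hx (hBk hb)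
      rw [hinf] at hahk
      have ha0 : a = 0 := hahk
      rw [ha0, zero_add] at hab
      rw [← hab]; exact hb
    have hstep : k ≤ ⁅(⊤ : LieIdeal K n), k⁆ := by
      refine le_trans hkB ?_
      exact LieSubmodule.mono_lie le_top (LieSubmodule.lie_le_left k k)
    have hall : ∀ m, k ≤ LieModule.lowerCentralSeries K n n m := by
      intro m
      induction m with
      | zero => simp [LieModule.lowerCentralSeries_zero]
      | succ m ih =>
        rw [LieModule.lowerCentralSeries_succ]
        exact le_trans hstep (LieSubmodule.mono_lie le_rfl ih)
    obtain ⟨m, hm⟩ := LieModule.IsNilpotent.nilpotent K n n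
    exact kne (le_bot_iff.mp (hm ▸ hall m))
  -- build the decomposition of the quotient
  refine hquot ⟨h.map π, k.map π, ?_, ?_, ?_, ?_⟩
  · intro hb
    rw [LieIdeal.map_eq_bot_iff, hker] at hb
    exact hhI hb
  · intro hb
    rw [LieIdeal.map_eq_bot_iff, hker] at hb
    exact hkI hb
  · rw [eq_bot_iff]
    intro x hx
    obtain ⟨hx1, hx2⟩ := hx
    obtain ⟨⟨a, ha⟩, rfl⟩ := LieIdeal.mem_map_of_surjective hπsurj hx1
    obtain ⟨⟨b, hb⟩, hba⟩ := LieIdeal.mem_map_of_surjective hπsurj hx2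
    have hab : π (a - b) = 0 := by
      rw [map_sub, hba, sub_self]
    rw [hπ0] at hab
    obtain ⟨u, hu, v, hv, huv⟩ := hsplit _ hab
    have : a - u ∈ h ⊓ k := by
      constructor
      · exact h.sub_mem ha (hAh hu)
      · have : a - u = b + v := by
          have : a - b = u + v := huv.symm
          have := sub_eq_iff_eq_add.mp this
          rw [this]; abel
        rw [this]
        exact k.add_mem hb (hBk hv)
    rw [hinf] at this
    have hau : a = u := by
      have h0 : a - u = 0 := this
      exact sub_eq_zero.mp h0
    have haI : a ∈ I := by
      rw [hau]; rw [hIAB]; exact le_sup_left (α := LieIdeal K n) hu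
    show π a ∈ (⊥ : LieIdeal K (n ⧸ I))
    rw [LieSubmodule.mem_bot, hπ0]
    exact haI
  · rw [← LieIdeal.map_sup, hsup]
    exact LieHom.idealRange_eq_top_of_surjective π hπsurj ▸ (LieHom.idealRange_eq_map π).symm
end

section
/- For any simple undirected graph Γ = (S,E), field K ⊂ ℂ, and c > 1, the image of the centre Z(n_{Γ,c}^K) under the projection π_ab : n_{Γ,c}^K → V onto the abelianization equals the K-span of the vertices of degree 0 in Γ. -/
open FreeLieAlgebra

attribute [local instance] LieRing.ofAssociativeRing

section Aux

variable (K : Type) [Field K] {L : Type} [LieRing L] [LieAlgebra K L]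

/-- The quotient map by a Lie ideal, as a morphism of Lie algebras. -/
noncomputable def lieQuotMk (I : LieIdeal K L) : L →ₗ⁅K⁆ L ⧸ I where
  toLinearMap := (LieSubmodule.Quotient.mk' I).toLinearMap
  map_lie' {x y} := by
    exact (LieSubmodule.Quotient.mk_bracket (R := K) (I := I) x y)

@[simp] lemma lieQuotMk_apply (I : LieIdeal K L) (x : L) :
    lieQuotMk K I x = LieSubmodule.Quotient.mk' I x := rfl

lemma lieQuotMk_surjective (I : LieIdeal K L) : Function.Surjective (lieQuotMk K I) :=
  LieSubmodule.Quotient.surjective_mk' I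

/-- The free Lie algebra is lie-generated by the range of `of`. -/
lemma freeLie_lieSpan_top (S : Type) :
    LieSubalgebra.lieSpan K (FreeLieAlgebra K S) (Set.range (of K)) = ⊤ := by
  set H := LieSubalgebra.lieSpan K (FreeLieAlgebra K S) (Set.range (of K)) with hH
  have hofmem : ∀ s : S, of K s ∈ H := fun s =>
    LieSubalgebra.subset_lieSpan ⟨s, rfl⟩
  let f : S → H := fun s => ⟨of K s, hofmem s⟩
  let F : FreeLieAlgebra K S →ₗ⁅K⁆ FreeLieAlgebra K S := H.incl.comp (lift K f)
  have hF : F = LieHom.id := by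
    apply FreeLieAlgebra.hom_ext
    intro s
    show H.incl (lift K f (of K s)) = of K s
    rw [lift_of_apply]
    rfl
  rw [eq_top_iff]
  intro x _
  have : F x = x := by rw [hF]; rfl
  rw [← this]
  exact (lift K f x).2

/-- If a Lie algebra is lie-generated by `X`, then it is spanned as a module by `X`
together with the commutator ideal. -/
lemma span_sup_commutator_eq_top {X : Set L}
    (hX : LieSubalgebra.lieSpan K L X = ⊤) (x : L) :
    x ∈ Submodule.span K X ⊔ (LieModule.lowerCentralSeries K L L 1).toSubmodule := by
  set P : Submodule K L :=
    Submodule.span K X ⊔ (LieModule.lowerCentralSeries K L L 1).toSubmodule with hP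
  have hbr : ∀ y z : L, ⁅y, z⁆ ∈ P := by
    intro y z
    apply Submodule.mem_sup_right
    show ⁅y, z⁆ ∈ LieModule.lowerCentralSeries K L L 1
    rw [LieModule.lowerCentralSeries_succ, LieModule.lowerCentralSeries_zero]
    exact LieSubmodule.lie_mem_lie (LieSubmodule.mem_top _) (LieSubmodule.mem_top _)
  let Q : LieSubalgebra K L :=
    { P with lie_mem' := fun {y z} _ _ => hbr y z }
  have hXQ : X ⊆ Q := fun y hy =>
    Submodule.mem_sup_left (Submodule.subset_span hy)
  have : LieSubalgebra.lieSpan K L X ≤ Q := (LieSubalgebra.lieSpan_le).mpr hXQ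
  rw [hX] at this
  exact this (LieSubalgebra.mem_top x)

end Aux

section MatSec

variable (K : Type) [Field K]

local notation "Mat" => Matrix (Fin 3) (Fin 3) K

noncomputable def E01 : Mat := Matrix.single 0 1 1
noncomputable def E12 : Mat := Matrix.single 1 2 1
noncomputable def E02 : Mat := Matrix.single 0 2 1

lemma lie_E01_E12 : ⁅E01 K, E12 K⁆ = E02 K := by
  rw [E01, E12, E02, Ring.lie_def, Matrix.single_mul_single_same,
    Matrix.single_mul_single_of_ne (h := by decide)]
  simp

lemma lie_E01_E02 : ⁅E01 K, E02 K⁆ = 0 := by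
  rw [E01, E02, Ring.lie_def,
    Matrix.single_mul_single_of_ne (h := by decide),
    Matrix.single_mul_single_of_ne (h := by decide)]
  simp

lemma lie_E12_E02 : ⁅E12 K, E02 K⁆ = 0 := by
  rw [E12, E02, Ring.lie_def,
    Matrix.single_mul_single_of_ne (h := by decide),
    Matrix.single_mul_single_of_ne (h := by decide)]
  simp

lemma E02_ne_zero : E02 K ≠ 0 := by
  intro h
  have := congrFun (congrFun h 0) 2
  rw [E02, Matrix.single_apply_same] at this
  rw [Matrix.zero_apply] at this
  exact one_ne_zero this

noncomputable def Wsub : Submodule K Mat := Submodule.span K {E01 K, E12 K, E02 K}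
noncomputable def Zsub : Submodule K Mat := Submodule.span K {E02 K}

lemma Zsub_le_Wsub : Zsub K ≤ Wsub K :=
  Submodule.span_mono (by intro x hx; simp_all [Set.mem_insert_iff])

lemma lie_W_E02 {x : Mat} (hx : x ∈ Wsub K) : ⁅x, E02 K⁆ = 0 := by
  induction hx using Submodule.span_induction with
  | mem y hy =>
    simp only [Set.mem_insert_iff, Set.mem_singleton_iff] at hy
    rcases hy with rfl | rfl | rfl
    · rw [lie_E01_E02]
    · rw [lie_E12_E02]
    · rw [lie_self]
  | zero => rw [zero_lie]
  | add y z _ _ hy hz => rw [add_lie, hy, hz, add_zero]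
  | smul c y _ hy => rw [smul_lie, hy, smul_zero]

lemma lie_W_Z {x z : Mat} (hx : x ∈ Wsub K) (hz : z ∈ Zsub K) : ⁅x, z⁆ = 0 := by
  obtain ⟨k, rfl⟩ := Submodule.mem_span_singleton.mp hz
  rw [lie_smul, lie_W_E02 K hx, smul_zero]

lemma lie_W_W {x y : Mat} (hx : x ∈ Wsub K) (hy : y ∈ Wsub K) : ⁅x, y⁆ ∈ Zsub K := by
  induction hx using Submodule.span_induction with
  | mem u hu =>
    induction hy using Submodule.span_induction with
    | mem v hv =>
      have hE02 : E02 K ∈ Zsub K := Submodule.subset_span rfl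
      simp only [Set.mem_insert_iff, Set.mem_singleton_iff] at hu hv
      rcases hu with rfl | rfl | rfl <;> rcases hv with rfl | rfl | rfl
      · rw [lie_self]; exact Submodule.zero_mem _
      · rw [lie_E01_E12]; exact hE02
      · rw [lie_E01_E02]; exact Submodule.zero_mem _
      · rw [← lie_skew, lie_E01_E12]; exact Submodule.neg_mem _ hE02
      · rw [lie_self]; exact Submodule.zero_mem _
      · rw [lie_E12_E02]; exact Submodule.zero_mem _
      · rw [← lie_skew, lie_E01_E02, neg_zero]; exact Submodule.zero_mem _
      · rw [← lie_skew, lie_E12_E02, neg_zero]; exact Submodule.zero_mem _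
      · rw [lie_self]; exact Submodule.zero_mem _
    | zero => rw [lie_zero]; exact Submodule.zero_mem _
    | add v w _ _ hv hw => rw [lie_add]; exact Submodule.add_mem _ hv hw
    | smul c v _ hv => rw [lie_smul]; exact Submodule.smul_mem _ _ hv
  | zero => rw [zero_lie]; exact Submodule.zero_mem _
  | add u v _ _ hu hv => rw [add_lie]; exact Submodule.add_mem _ hu hv
  | smul c u _ hu => rw [smul_lie]; exact Submodule.smul_mem _ _ hu

/-- `W` as a Lie subalgebra. -/
noncomputable def WLie : LieSubalgebra K Mat :=
  { Wsub K with lie_mem' := fun {x y} hx hy => Zsub_le_Wsub K (lie_W_W K hx hy) }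

lemma mem_WLie_iff {x : Mat} : x ∈ WLie K ↔ x ∈ Wsub K := Iff.rfl

lemma E01_mem_W : E01 K ∈ Wsub K := Submodule.subset_span (by simp)
lemma E12_mem_W : E12 K ∈ Wsub K := Submodule.subset_span (by simp)

end MatSec

/-- The ideal `I_Γ` of the free Lie algebra on the vertices generated by the brackets of
non-adjacent vertices. -/
noncomputable def graphIdeal (K : Type) [Field K] {S : Type} (G : SimpleGraph S) :
    LieIdeal K (FreeLieAlgebra K S) :=
  LieSubmodule.lieSpan K (FreeLieAlgebra K S)
    {x | ∃ a b : S, ¬ G.Adj a b ∧ x = ⁅FreeLieAlgebra.of K a, FreeLieAlgebra.of K b⁆}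

/-- The Lie algebra `g_Γ^K` associated to the graph `Γ` over the field `K`. -/
def graphLieAlgebra (K : Type) [Field K] {S : Type} (G : SimpleGraph S) : Type :=
  FreeLieAlgebra K S ⧸ graphIdeal K G

noncomputable instance (K : Type) [Field K] {S : Type} (G : SimpleGraph S) :
    LieRing (graphLieAlgebra K G) :=
  inferInstanceAs (LieRing (FreeLieAlgebra K S ⧸ graphIdeal K G))

noncomputable instance (K : Type) [Field K] {S : Type} (G : SimpleGraph S) :
    LieAlgebra K (graphLieAlgebra K G) :=
  inferInstanceAs (LieAlgebra K (FreeLieAlgebra K S ⧸ graphIdeal K G))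

/-- The `c`-step nilpotent Lie algebra `n_{Γ,c}^K` associated to the graph `Γ` over `K`:
the quotient of `g_Γ^K` by `γ_{c+1}(g_Γ^K)` (note that in Mathlib's indexing
`LieModule.lowerCentralSeries K g g c = γ_{c+1}`). -/
def graphNilpotentLieAlgebra (K : Type) [Field K] {S : Type} (G : SimpleGraph S) (c : ℕ) :
    Type :=
  graphLieAlgebra K G ⧸
    LieModule.lowerCentralSeries K (graphLieAlgebra K G) (graphLieAlgebra K G) c

noncomputable instance (K : Type) [Field K] {S : Type} (G : SimpleGraph S) (c : ℕ) :
    LieRing (graphNilpotentLieAlgebra K G c) :=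
  inferInstanceAs (LieRing (graphLieAlgebra K G ⧸
    LieModule.lowerCentralSeries K (graphLieAlgebra K G) (graphLieAlgebra K G) c))

noncomputable instance (K : Type) [Field K] {S : Type} (G : SimpleGraph S) (c : ℕ) :
    LieAlgebra K (graphNilpotentLieAlgebra K G c) :=
  inferInstanceAs (LieAlgebra K (graphLieAlgebra K G ⧸
    LieModule.lowerCentralSeries K (graphLieAlgebra K G) (graphLieAlgebra K G) c))

/-- The image of a vertex in `n_{Γ,c}^K`. -/
noncomputable def graphVertex (K : Type) [Field K] {S : Type} (G : SimpleGraph S) (c : ℕ)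
    (s : S) : graphNilpotentLieAlgebra K G c :=
  LieSubmodule.Quotient.mk' _ (LieSubmodule.Quotient.mk' (graphIdeal K G) (FreeLieAlgebra.of K s))

section GraphMaps

variable (K : Type) [Field K] {S : Type} (G : SimpleGraph S) (c : ℕ)

/-- Quotient map onto `g_Γ`. -/
noncomputable def gMk : FreeLieAlgebra K S →ₗ⁅K⁆ graphLieAlgebra K G :=
  lieQuotMk K (graphIdeal K G)

/-- Quotient map onto `n_{Γ,c}`. -/
noncomputable def nMk : graphLieAlgebra K G →ₗ⁅K⁆ graphNilpotentLieAlgebra K G c :=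
  lieQuotMk K (LieModule.lowerCentralSeries K (graphLieAlgebra K G) (graphLieAlgebra K G) c)

/-- The composite quotient map from the free Lie algebra onto `n_{Γ,c}`. -/
noncomputable def fullMk : FreeLieAlgebra K S →ₗ⁅K⁆ graphNilpotentLieAlgebra K G c :=
  (nMk K G c).comp (gMk K G)

lemma fullMk_of (s : S) : fullMk K G c (of K s) = graphVertex K G c s := rfl

lemma gMk_surjective : Function.Surjective (gMk K G) :=
  lieQuotMk_surjective K _

lemma nMk_surjective : Function.Surjective (nMk K G c) :=
  lieQuotMk_surjective K _

lemma fullMk_surjective : Function.Surjective (fullMk K G c) :=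
  (nMk_surjective K G c).comp (gMk_surjective K G)

lemma gMk_eq_zero {x : FreeLieAlgebra K S} : gMk K G x = 0 ↔ x ∈ graphIdeal K G :=
  LieSubmodule.Quotient.mk_eq_zero _

lemma nMk_eq_zero {x : graphLieAlgebra K G} :
    nMk K G c x = 0 ↔
      x ∈ LieModule.lowerCentralSeries K (graphLieAlgebra K G) (graphLieAlgebra K G) c :=
  LieSubmodule.Quotient.mk_eq_zero _

/-- A Lie algebra morphism from the free Lie algebra which kills the graph ideal and the
second term of the lower central series kills everything killed by `fullMk` (when `2 ≤ c`). -/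
lemma kills_kernel {T : Type} [LieRing T] [LieAlgebra K T]
    (ψ : FreeLieAlgebra K S →ₗ⁅K⁆ T)
    (hI : ∀ m ∈ graphIdeal K G, ψ m = 0)
    (hN : ∀ m ∈ LieModule.lowerCentralSeries K (FreeLieAlgebra K S) (FreeLieAlgebra K S) 2,
      ψ m = 0)
    (hc : 2 ≤ c) {u : FreeLieAlgebra K S} (hu : fullMk K G c u = 0) : ψ u = 0 := by
  have h1 : gMk K G u ∈
      LieModule.lowerCentralSeries K (graphLieAlgebra K G) (graphLieAlgebra K G) c :=
    (nMk_eq_zero K G c).mp hu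
  have h2 : LieIdeal.map (gMk K G)
      (LieModule.lowerCentralSeries K (FreeLieAlgebra K S) (FreeLieAlgebra K S) c) =
      LieModule.lowerCentralSeries K (graphLieAlgebra K G) (graphLieAlgebra K G) c :=
    LieIdeal.lowerCentralSeries_map_eq c (gMk_surjective K G)
  rw [← h2] at h1
  obtain ⟨⟨y, hy⟩, hyeq⟩ := LieIdeal.mem_map_of_surjective (gMk_surjective K G) h1
  have hdiff : u - y ∈ graphIdeal K G := by
    rw [← gMk_eq_zero K G, map_sub, hyeq, sub_self]
  have hy2 : y ∈ LieModule.lowerCentralSeries K (FreeLieAlgebra K S) (FreeLieAlgebra K S) 2 :=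
    LieModule.antitone_lowerCentralSeries K _ _ hc hy
  calc ψ u = ψ (u - y) + ψ y := by rw [← map_add, sub_add_cancel]
  _ = 0 := by rw [hI _ hdiff, hN _ hy2, add_zero]

/-- A vertex of degree zero is central in `n_{Γ,c}`. -/
lemma vertex_central (a : S) (ha : ∀ b : S, ¬ G.Adj a b) :
    graphVertex K G c a ∈ LieAlgebra.center K (graphNilpotentLieAlgebra K G c) := by
  rw [LieModule.mem_maxTrivSubmodule]
  intro y
  obtain ⟨x, rfl⟩ := fullMk_surjective K G c y
  -- the set of `x` commuting with the vertex is a Lie subalgebra of the free Lie algebra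
  set v := graphVertex K G c a with hv
  let P : Submodule K (FreeLieAlgebra K S) :=
    LinearMap.ker ((LieAlgebra.ad K (graphNilpotentLieAlgebra K G c) v).comp
      (fullMk K G c).toLinearMap)
  let Q : LieSubalgebra K (FreeLieAlgebra K S) :=
    { P with
      lie_mem' := fun {x y} hx hy => by
        have hx' : ⁅v, fullMk K G c x⁆ = 0 := hx
        have hy' : ⁅v, fullMk K G c y⁆ = 0 := hy
        show ⁅v, fullMk K G c ⁅x, y⁆⁆ = 0
        rw [LieHom.map_lie, leibniz_lie, hx', hy', lie_zero, zero_lie, add_zero] }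
  have hof : Set.range (of K) ⊆ (Q : Set (FreeLieAlgebra K S)) := by
    rintro _ ⟨s, rfl⟩
    show ⁅v, fullMk K G c (of K s)⁆ = 0
    rw [fullMk_of, hv, ← fullMk_of K G c a, ← fullMk_of K G c s, ← LieHom.map_lie]
    have hmem : ⁅of K a, of K s⁆ ∈ graphIdeal K G :=
      LieSubmodule.subset_lieSpan ⟨a, s, ha s, rfl⟩
    show nMk K G c (gMk K G ⁅of K a, of K s⁆) = 0
    rw [(gMk_eq_zero K G).mpr hmem, map_zero]
  have hQ : ∀ x, x ∈ Q := by
    intro x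
    have := (LieSubalgebra.lieSpan_le (K := Q)).mpr hof
    rw [freeLie_lieSpan_top] at this
    exact this (LieSubalgebra.mem_top x)
  have : ⁅v, fullMk K G c x⁆ = 0 := hQ x
  rw [← lie_skew, this, neg_zero]

end GraphMaps

section Phi

variable (K : Type) [Field K] {S : Type} (G : SimpleGraph S) (c : ℕ)

open scoped Classical in
/-- The map sending vertex `a` to `E01`, vertex `b` to `E12` and all other vertices to `0`. -/
noncomputable def phiFun (a b : S) : S → Matrix (Fin 3) (Fin 3) K := fun s =>
  if s = a then E01 K else if s = b then E12 K else 0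

/-- The test morphism detecting the coefficient of a vertex of positive degree. -/
noncomputable def phi (a b : S) : FreeLieAlgebra K S →ₗ⁅K⁆ Matrix (Fin 3) (Fin 3) K :=
  lift K (phiFun K a b)

lemma phiFun_mem_W (a b s : S) : phiFun K a b s ∈ Wsub K := by
  rw [phiFun]
  split_ifs
  · exact E01_mem_W K
  · exact E12_mem_W K
  · exact Submodule.zero_mem _

lemma phiFun_a (a b : S) : phiFun K a b a = E01 K := by rw [phiFun, if_pos rfl]

lemma phiFun_b (a b : S) (h : b ≠ a) : phiFun K a b b = E12 K := by
  rw [phiFun, if_neg h, if_pos rfl]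

lemma phiFun_other (a b s : S) (ha : s ≠ a) (hb : s ≠ b) : phiFun K a b s = 0 := by
  rw [phiFun, if_neg ha, if_neg hb]

lemma phi_of (a b s : S) : phi K a b (of K s) = phiFun K a b s := by
  rw [phi, lift_of_apply]

lemma phi_mem_W (a b : S) (x : FreeLieAlgebra K S) : phi K a b x ∈ Wsub K := by
  let Q : LieSubalgebra K (FreeLieAlgebra K S) := (WLie K).comap (phi K a b)
  have hof : Set.range (of K) ⊆ (Q : Set (FreeLieAlgebra K S)) := by
    rintro _ ⟨s, rfl⟩
    show phi K a b (of K s) ∈ WLie K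
    rw [phi_of]
    exact phiFun_mem_W K a b s
  have hQ : ∀ x, x ∈ Q := by
    intro x
    have := (LieSubalgebra.lieSpan_le (K := Q)).mpr hof
    rw [freeLie_lieSpan_top] at this
    exact this (LieSubalgebra.mem_top x)
  exact hQ x

/-- `phi` maps the commutator ideal into `Z`. -/
lemma phi_lcs_one (a b : S) {m : FreeLieAlgebra K S}
    (hm : m ∈ LieModule.lowerCentralSeries K (FreeLieAlgebra K S) (FreeLieAlgebra K S) 1) :
    phi K a b m ∈ Zsub K := by
  let N : LieSubmodule K (FreeLieAlgebra K S) (FreeLieAlgebra K S) :=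
    { (Zsub K).comap (phi K a b).toLinearMap with
      lie_mem := fun {x m} hm => by
        have hm' : phi K a b m ∈ Zsub K := hm
        show phi K a b ⁅x, m⁆ ∈ Zsub K
        rw [LieHom.map_lie, lie_W_Z K (phi_mem_W K a b x) hm']
        exact Submodule.zero_mem _ }
  have : LieModule.lowerCentralSeries K (FreeLieAlgebra K S) (FreeLieAlgebra K S) 1 ≤ N := by
    rw [LieModule.lowerCentralSeries_succ, LieModule.lowerCentralSeries_zero]
    rw [LieSubmodule.lie_le_iff]
    intro x _ m _
    show phi K a b ⁅x, m⁆ ∈ Zsub K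
    rw [LieHom.map_lie]
    exact lie_W_W K (phi_mem_W K a b x) (phi_mem_W K a b m)
  exact this hm

/-- `phi` kills the second term of the lower central series. -/
lemma phi_lcs_two (a b : S) {m : FreeLieAlgebra K S}
    (hm : m ∈ LieModule.lowerCentralSeries K (FreeLieAlgebra K S) (FreeLieAlgebra K S) 2) :
    phi K a b m = 0 := by
  let N : LieSubmodule K (FreeLieAlgebra K S) (FreeLieAlgebra K S) :=
    { LinearMap.ker (phi K a b).toLinearMap with
      lie_mem := fun {x m} hm => by
        have hm' : phi K a b m = 0 := hm
        show phi K a b ⁅x, m⁆ = 0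
        rw [LieHom.map_lie, hm', lie_zero] }
  have : LieModule.lowerCentralSeries K (FreeLieAlgebra K S) (FreeLieAlgebra K S) 2 ≤ N := by
    rw [show (2 : ℕ) = 1 + 1 from rfl, LieModule.lowerCentralSeries_succ]
    rw [LieSubmodule.lie_le_iff]
    intro x _ m hm
    show phi K a b ⁅x, m⁆ = 0
    rw [LieHom.map_lie]
    exact lie_W_Z K (phi_mem_W K a b x) (phi_lcs_one K a b hm)
  exact this hm

/-- If `a` and `b` are adjacent then `phi` kills the graph ideal. -/
lemma phi_ideal (a b : S) (hab : G.Adj a b) {m : FreeLieAlgebra K S}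
    (hm : m ∈ graphIdeal K G) : phi K a b m = 0 := by
  have hba : b ≠ a := (G.ne_of_adj hab).symm
  let N : LieSubmodule K (FreeLieAlgebra K S) (FreeLieAlgebra K S) :=
    { LinearMap.ker (phi K a b).toLinearMap with
      lie_mem := fun {x m} hm => by
        have hm' : phi K a b m = 0 := hm
        show phi K a b ⁅x, m⁆ = 0
        rw [LieHom.map_lie, hm', lie_zero] }
  have : graphIdeal K G ≤ N := by
    rw [graphIdeal, LieSubmodule.lieSpan_le]
    rintro _ ⟨u, v, huv, rfl⟩
    show phi K a b ⁅of K u, of K v⁆ = 0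
    rw [LieHom.map_lie, phi_of, phi_of]
    by_cases hua : u = a
    · rw [hua, phiFun_a]
      by_cases hvb : v = b
      · exact absurd (hua ▸ hvb ▸ hab) huv
      · by_cases hva : v = a
        · rw [hva, phiFun_a]; exact lie_self _
        · rw [phiFun_other K a b v hva hvb]; exact lie_zero _
    · by_cases hub : u = b
      · rw [hub, phiFun_b K a b hba]
        by_cases hva : v = a
        · exact absurd (hub ▸ hva ▸ G.adj_symm hab) huv
        · by_cases hvb : v = b
          · rw [hvb, phiFun_b K a b hba]; exact lie_self _
          · rw [phiFun_other K a b v hva hvb]; exact lie_zero _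
      · rw [phiFun_other K a b u hua hub]; exact zero_lie _
  exact this hm

end Phi

set_option maxHeartbeats 2000000 in
set_option synthInstance.maxHeartbeats 400000 in
/-- for any graph `Γ`, field `K ⊆ ℂ` and `c > 1`, the image of the centre of
`n_{Γ,c}^K` under the projection onto the abelianization `n/[n,n]` (which is identified
with `V = Span_K(S)`) is the span of (the images of) the vertices of degree `0`. -/
theorem center_projects_to_degree_zero_vertices
    (K : Subfield ℂ) (S : Type) [Fintype S] (G : SimpleGraph S) (c : ℕ) (hc : 1 < c) :
    Submodule.map
      (LieSubmodule.Quotient.mk' (LieModule.lowerCentralSeries K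
        (graphNilpotentLieAlgebra K G c) (graphNilpotentLieAlgebra K G c) 1)).toLinearMap
      (LieAlgebra.center K (graphNilpotentLieAlgebra K G c) :
        Submodule K (graphNilpotentLieAlgebra K G c)) =
    Submodule.span K
      {x | ∃ a : S, (∀ b : S, ¬ G.Adj a b) ∧
        x = LieSubmodule.Quotient.mk' (LieModule.lowerCentralSeries K
          (graphNilpotentLieAlgebra K G c) (graphNilpotentLieAlgebra K G c) 1)
            (graphVertex K G c a)} := by
  classical
  apply le_antisymm
  · -- image of the centre is contained in the span of degree-zero vertices
    intro y hy
    obtain ⟨z, hz, rfl⟩ := Submodule.mem_map.mp hy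
    have hz' : z ∈ LieAlgebra.center K (graphNilpotentLieAlgebra K G c) := hz
    have hcent : ∀ u, ⁅u, z⁆ = 0 :=
      (LieModule.mem_maxTrivSubmodule K (graphNilpotentLieAlgebra K G c)
        (graphNilpotentLieAlgebra K G c) z).mp hz'
    obtain ⟨x, rfl⟩ := fullMk_surjective K G c z
    have hdec := span_sup_commutator_eq_top K (freeLie_lieSpan_top K S) x
    rw [Submodule.mem_sup] at hdec
    obtain ⟨v, hv, w, hw, rfl⟩ := hdec
    rw [Submodule.mem_span_range_iff_exists_fun] at hv
    obtain ⟨cf, rfl⟩ := hv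
    have hw1 : w ∈ LieModule.lowerCentralSeries K (FreeLieAlgebra K S) (FreeLieAlgebra K S) 1 :=
      hw
    -- coefficients of vertices of positive degree vanish
    have key : ∀ a b : S, G.Adj a b → cf a = 0 := by
      intro a b hab
      have hba : b ≠ a := (G.ne_of_adj hab).symm
      have h0 : fullMk K G c ⁅of K b, (∑ s, cf s • of K s) + w⁆ = 0 := by
        rw [LieHom.map_lie]
        exact hcent _
      have hphi : phi K a b ⁅of K b, (∑ s, cf s • of K s) + w⁆ = 0 :=
        kills_kernel K G c (phi K a b) (fun m hm => phi_ideal K G a b hab hm)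
          (fun m hm => phi_lcs_two K a b hm) hc h0
      have hw' : phi K a b w ∈ Zsub K := phi_lcs_one K a b hw1
      have hsum : phi K a b (∑ s, cf s • of K s) = ∑ s, cf s • phiFun K a b s := by
        have := map_sum ((phi K a b).toLinearMap) (fun s => cf s • of (↥K) s) Finset.univ
        simp only [LieHom.coe_toLinearMap] at this
        rw [this]
        refine Finset.sum_congr rfl fun s _ => ?_
        rw [map_smul, phi_of]
      rw [LieHom.map_lie, map_add, hsum, phi_of, phiFun_b K a b hba] at hphi
      have hlie : ⁅E12 K, ∑ s, cf s • phiFun K a b s⁆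
          = ∑ s, cf s • ⁅E12 K, phiFun K a b s⁆ := by
        have := map_sum (LieAlgebra.ad K (Matrix (Fin 3) (Fin 3) K) (E12 K))
          (fun s => cf s • phiFun K a b s) Finset.univ
        rw [LieAlgebra.ad_apply] at this
        rw [this]
        refine Finset.sum_congr rfl fun s _ => ?_
        rw [map_smul, LieAlgebra.ad_apply]
      have hsingle : ∑ s, cf s • ⁅E12 K, phiFun K a b s⁆ = cf a • ⁅E12 K, E01 K⁆ := by
        rw [Finset.sum_eq_single_of_mem a (Finset.mem_univ a)]
        · rw [phiFun_a]
        · intro s _ hs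
          by_cases hsb : s = b
          · rw [hsb, phiFun_b K a b hba, lie_self, smul_zero]
          · rw [phiFun_other K a b s hs hsb, lie_zero, smul_zero]
      rw [lie_add, hlie, hsingle, lie_W_Z K (E12_mem_W K) hw', add_zero] at hphi
      rw [← lie_skew, lie_E01_E12, smul_neg, neg_eq_zero] at hphi
      rcases smul_eq_zero.mp hphi with h | h
      · exact h
      · exact absurd h (E02_ne_zero K)
    -- now push the decomposition through the projections
    rw [map_add]
    rw [LinearMap.map_add]
    apply Submodule.add_mem
    · have hfsum : fullMk K G c (∑ s, cf s • of K s)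
          = ∑ s, cf s • graphVertex K G c s := by
        have := map_sum ((fullMk K G c).toLinearMap) (fun s => cf s • of (↥K) s) Finset.univ
        simp only [LieHom.coe_toLinearMap] at this
        rw [this]
        refine Finset.sum_congr rfl fun s _ => ?_
        rw [map_smul, fullMk_of]
      rw [hfsum, map_sum]
      apply Submodule.sum_mem
      intro s _
      rw [LinearMap.map_smul]
      by_cases hdeg : ∀ b : S, ¬ G.Adj s b
      · exact Submodule.smul_mem _ _ (Submodule.subset_span ⟨s, hdeg, rfl⟩)
      · simp only [not_forall, not_not] at hdeg
        obtain ⟨b, hb⟩ := hdeg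
        rw [key s b hb, zero_smul]
        exact Submodule.zero_mem _
    · have hmem : fullMk K G c w ∈ LieModule.lowerCentralSeries K
          (graphNilpotentLieAlgebra K G c) (graphNilpotentLieAlgebra K G c) 1 :=
        LieIdeal.map_lowerCentralSeries_le 1 (LieIdeal.mem_map hw1)
      have : (LieSubmodule.Quotient.mk' (LieModule.lowerCentralSeries K
          (graphNilpotentLieAlgebra K G c) (graphNilpotentLieAlgebra K G c) 1))
          (fullMk K G c w) = 0 :=
        (LieSubmodule.Quotient.mk_eq_zero _).mpr hmem
      rw [show (LieSubmodule.Quotient.mk' (LieModule.lowerCentralSeries K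
          (graphNilpotentLieAlgebra K G c) (graphNilpotentLieAlgebra K G c) 1)).toLinearMap
          (fullMk K G c w) = 0 from this]
      exact Submodule.zero_mem _
  · -- degree-zero vertices are central
    rw [Submodule.span_le]
    rintro _ ⟨a, ha, rfl⟩
    exact ⟨graphVertex K G c a, vertex_central K G c a ha, rfl⟩
end
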